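/- arXiv:2106.15380 — 13 statements merged into one kernel-verified Lean document; each statement's English description precedes it below -/
import Mathlib

section
/- For every probability distribution q on X whose support is contained in the support of p, one has E_{x∼q}[v(x)] − λ·KL(q‖p) ≤ λ·log(Σ_{x∈X} p(x)·exp(v(x)/λ)). In particular, the supremum over all such q of E_q[v] − λ·KL(q‖p) equals λ·log(Σ_{x∈X} p(x)·exp(v(x)/λ)). -/
open Classical

open Real Finset

/-! With the tilted weights `w x = p x * exp (v x / λ)` and `Z = ∑ w`, the objective equals
`λ ∑ q log (w / q)`, which by Jensen's inequality for the concave `log` is at most `λ log Z`.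
The Gibbs distribution `q = w / Z` makes `w / q` constant equal to `Z`, so the bound is attained
and is the supremum. -/

theorem sum_mul_log_div_le_log_sum {ι : Type*} (s : Finset ι) {q w : ι → ℝ}
    (hq : ∀ i ∈ s, 0 ≤ q i) (hq1 : ∑ i ∈ s, q i = 1) (hw : ∀ i ∈ s, 0 ≤ w i)
    (hqw : ∀ i ∈ s, 0 < q i → 0 < w i) :
    ∑ i ∈ s, q i * log (w i / q i) ≤ log (∑ i ∈ s, w i) := by
  set t := s.filter (fun i => 0 < q i)
  have hpos : ∀ i ∈ t, 0 < q i := fun i hi => (mem_filter.mp hi).2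
  have hsupp : ∀ i ∈ s, q i ≠ 0 → 0 < q i := fun i hi hqi => (hq i hi).lt_of_ne' hqi
  have hrestrict : ∀ f : ι → ℝ, ∑ i ∈ t, q i * f i = ∑ i ∈ s, q i * f i := fun f =>
    sum_filter_of_ne fun i hi hne => hsupp i hi (left_ne_zero_of_mul hne)
  have ht1 : ∑ i ∈ t, q i = 1 := by simpa using (hrestrict 1).trans (by simpa using hq1)
  have hwt : ∑ i ∈ t, q i * (w i / q i) = ∑ i ∈ t, w i :=
    sum_congr rfl fun i hi => mul_div_cancel₀ _ (hpos i hi).ne'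
  have hwt_pos : 0 < ∑ i ∈ t, w i := by
    obtain ⟨i, hi, -⟩ := (sum_pos_iff_of_nonneg fun i hi => (hpos i hi).le).mp (by linarith)
    have hit := mem_filter.mp hi
    exact (sum_pos_iff_of_nonneg fun i hi => hw i (mem_filter.mp hi).1).mpr
      ⟨i, hi, hqw i hit.1 hit.2⟩
  calc ∑ i ∈ s, q i * log (w i / q i)
      = ∑ i ∈ t, q i • log (w i / q i) := (hrestrict _).symm
    _ ≤ log (∑ i ∈ t, q i • (w i / q i)) :=
        strictConcaveOn_log_Ioi.concaveOn.le_map_sum (fun i hi => (hpos i hi).le) ht1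
          fun i hi => div_pos (hqw i (mem_filter.mp hi).1 (hpos i hi)) (hpos i hi)
    _ = log (∑ i ∈ t, w i) := by simp only [smul_eq_mul, hwt]
    _ ≤ log (∑ i ∈ s, w i) :=
        log_le_log hwt_pos (sum_le_sum_of_subset_of_nonneg (filter_subset _ _)
          fun i hi _ => hw i hi)

theorem sum_div_sum_mul_log_div_div_sum {ι : Type*} (s : Finset ι) {w : ι → ℝ}
    (hZ : 0 < ∑ i ∈ s, w i) :
    ∑ i ∈ s, w i / (∑ j ∈ s, w j) * log (w i / (w i / ∑ j ∈ s, w j)) = log (∑ i ∈ s, w i) := by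
  have hterm : ∀ i ∈ s, w i / (∑ j ∈ s, w j) * log (w i / (w i / ∑ j ∈ s, w j))
      = w i / (∑ j ∈ s, w j) * log (∑ j ∈ s, w j) := fun i _ => by
    rcases eq_or_ne (w i) 0 with hwi | hwi
    · simp [hwi]
    · rw [div_div_cancel₀ hwi]
  rw [sum_congr rfl hterm, ← sum_mul, ← sum_div, div_self hZ.ne', one_mul]

theorem sum_mul_sub_mul_sum_filter_mul_log_div {ι : Type*} (s : Finset ι) (p q v : ι → ℝ)
    {lam : ℝ} (hlam : lam ≠ 0) (hq : ∀ i ∈ s, 0 ≤ q i) (hqp : ∀ i ∈ s, 0 < q i → 0 < p i) :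
    (∑ i ∈ s, q i * v i) - lam * ∑ i ∈ s with 0 < q i, q i * log (q i / p i)
      = lam * ∑ i ∈ s, q i * log (p i * exp (v i / lam) / q i) := by
  rw [sum_filter_of_ne fun i hi hne => (hq i hi).lt_of_ne' (left_ne_zero_of_mul hne),
    mul_sum, mul_sum, ← sum_sub_distrib]
  refine sum_congr rfl fun i hi => ?_
  rcases (hq i hi).eq_or_lt with hqi | hqi
  · simp [← hqi]
  · have hpi := hqp i hi hqi
    rw [log_div (by positivity) hqi.ne', log_mul hpi.ne' (exp_pos _).ne', log_exp,
      log_div hqi.ne' hpi.ne']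
    field_simp
    ring

theorem statement0_general {X : Type} [Fintype X]
    (p : X → ℝ) (hp0 : ∀ x, 0 ≤ p x) (hp1 : ∑ x : X, p x = 1)
    (v : X → ℝ) (lam : ℝ) (hlam : 0 < lam) :
    (∀ q : X → ℝ, (∀ x, 0 ≤ q x) → (∑ x : X, q x = 1) → (∀ x, 0 < q x → 0 < p x) →
      (∑ x : X, q x * v x) -
          lam * ∑ x ∈ Finset.univ.filter (fun x => 0 < q x), q x * Real.log (q x / p x)
        ≤ lam * Real.log (∑ x : X, p x * Real.exp (v x / lam))) ∧
    sSup {r : ℝ | ∃ q : X → ℝ, (∀ x, 0 ≤ q x) ∧ (∑ x : X, q x = 1) ∧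
        (∀ x, 0 < q x → 0 < p x) ∧
        r = (∑ x : X, q x * v x) -
          lam * ∑ x ∈ Finset.univ.filter (fun x => 0 < q x), q x * Real.log (q x / p x)}
      = lam * Real.log (∑ x : X, p x * Real.exp (v x / lam)) := by
  set w : X → ℝ := fun x => p x * exp (v x / lam)
  have hw : ∀ x, 0 ≤ w x := fun x => mul_nonneg (hp0 x) (exp_pos _).le
  have hpw : ∀ x, 0 < p x → 0 < w x := fun x hpx => mul_pos hpx (exp_pos _)
  have hZ : 0 < ∑ x, w x := by
    obtain ⟨x, -, hpx⟩ := (sum_pos_iff_of_nonneg fun x _ => hp0 x).mp (by linarith)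
    exact (sum_pos_iff_of_nonneg fun x _ => hw x).mpr ⟨x, mem_univ x, hpw x hpx⟩
  have hbound : ∀ q : X → ℝ, (∀ x, 0 ≤ q x) → (∑ x, q x = 1) → (∀ x, 0 < q x → 0 < p x) →
      (∑ x, q x * v x) - lam * ∑ x ∈ univ.filter (fun x => 0 < q x), q x * log (q x / p x)
        ≤ lam * log (∑ x, w x) := fun q hq hq1 hqp => by
    rw [sum_mul_sub_mul_sum_filter_mul_log_div _ p q v hlam.ne' (fun x _ => hq x)
      fun x _ => hqp x]
    exact mul_le_mul_of_nonneg_left (sum_mul_log_div_le_log_sum _ (fun x _ => hq x) hq1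
      (fun x _ => hw x) fun x _ hqx => hpw x (hqp x hqx)) hlam.le
  set g : X → ℝ := fun x => w x / ∑ y, w y
  have hg : ∀ x, 0 ≤ g x := fun x => div_nonneg (hw x) hZ.le
  have hg1 : ∑ x, g x = 1 := by rw [← sum_div, div_self hZ.ne']
  have hgp : ∀ x, 0 < g x → 0 < p x := fun x hgx =>
    (hp0 x).lt_of_ne' fun hpx => by simp [g, w, hpx] at hgx
  have hg_value : (∑ x, g x * v x) - lam * ∑ x ∈ univ.filter (fun x => 0 < g x),
      g x * log (g x / p x) = lam * log (∑ x, w x) := by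
    rw [sum_mul_sub_mul_sum_filter_mul_log_div _ p g v hlam.ne' (fun x _ => hg x)
      fun x _ => hgp x, sum_div_sum_mul_log_div_div_sum _ hZ]
  refine ⟨hbound, IsGreatest.csSup_eq ⟨⟨g, hg, hg1, hgp, hg_value.symm⟩, ?_⟩⟩
  rintro r ⟨q, hq, hq1, hqp, rfl⟩
  exact hbound q hq hq1 hqp

/-- For every probability distribution `q` on a finite nonempty set `X`
whose support is contained in the support of `p`, one has
`E_{x∼q}[v(x)] − λ·KL(q‖p) ≤ λ·log(Σ_x p(x)·exp(v(x)/λ))`, and the supremum over all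
such `q` of this quantity equals `λ·log(Σ_x p(x)·exp(v(x)/λ))`. -/
theorem statement0 {X : Type} [Fintype X] [Nonempty X]
    (p : X → ℝ) (hp0 : ∀ x, 0 ≤ p x) (hp1 : ∑ x : X, p x = 1)
    (v : X → ℝ) (lam : ℝ) (hlam : 0 < lam) :
    (∀ q : X → ℝ, (∀ x, 0 ≤ q x) → (∑ x : X, q x = 1) → (∀ x, 0 < q x → 0 < p x) →
      (∑ x : X, q x * v x) -
          lam * ∑ x ∈ Finset.univ.filter (fun x => 0 < q x), q x * Real.log (q x / p x)
        ≤ lam * Real.log (∑ x : X, p x * Real.exp (v x / lam))) ∧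
    sSup {r : ℝ | ∃ q : X → ℝ, (∀ x, 0 ≤ q x) ∧ (∑ x : X, q x = 1) ∧
        (∀ x, 0 < q x → 0 < p x) ∧
        r = (∑ x : X, q x * v x) -
          lam * ∑ x ∈ Finset.univ.filter (fun x => 0 < q x), q x * Real.log (q x / p x)}
      = lam * Real.log (∑ x : X, p x * Real.exp (v x / lam)) :=
  statement0_general p hp0 hp1 v lam hlam
end

section
/- There exists exactly one Bellman solution z : S⁺ → ℝ of the LMDP. -/
open Classical

/-- A function `z : S⁺ → ℝ` (with `S⁺ = S ⊔ T`) is a Bellman solution of the LMDP if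
`z(t) = exp(J(t)/λ)` for every terminal state `t ∈ T` and
`z(s) = exp(R(s)/λ)·Σ_{x∈S⁺} P(x|s)·z(x)` for every non-terminal state `s ∈ S`. -/
def IsBellman {S T : Type} [Fintype S] [Fintype T]
    (P : S → S ⊕ T → ℝ) (R : S → ℝ) (J : T → ℝ) (lam : ℝ) (z : S ⊕ T → ℝ) : Prop :=
  (∀ t : T, z (Sum.inr t) = Real.exp (J t / lam)) ∧
  (∀ s : S, z (Sum.inl s) = Real.exp (R s / lam) * ∑ x : S ⊕ T, P s x * z x)

/-- There exists exactly one Bellman solution `z : S⁺ → ℝ` of the LMDP. -/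
theorem statement3 {S T : Type} [Fintype S] [Nonempty S] [Fintype T]
    (P : S → S ⊕ T → ℝ) (R : S → ℝ) (J : T → ℝ) (lam : ℝ)
    (hP0 : ∀ s x, 0 ≤ P s x) (hP1 : ∀ s, ∑ x : S ⊕ T, P s x = 1)
    (hR : ∀ s, R s < 0) (hlam : 0 < lam) :
    ∃! z : S ⊕ T → ℝ, IsBellman P R J lam z := by
  -- max of R
  set M : ℝ := Finset.univ.sup' (Finset.univ_nonempty) R with hMdef
  have hM : M < 0 := by
    rw [hMdef, Finset.sup'_lt_iff]
    intro s _
    exact hR s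
  have hMle : ∀ s, R s ≤ M := fun s => Finset.le_sup' R (Finset.mem_univ s)
  set K : NNReal := ⟨Real.exp (M / lam), (Real.exp_pos _).le⟩ with hKdef
  have hKcoe : (K : ℝ) = Real.exp (M / lam) := rfl
  have hK1 : K < 1 := by
    rw [← NNReal.coe_lt_one, hKcoe]
    rw [Real.exp_lt_one_iff]
    exact div_neg_of_neg_of_pos hM hlam
  have hexpK : ∀ s, Real.exp (R s / lam) ≤ (K : ℝ) := by
    intro s
    rw [hKcoe]
    exact Real.exp_le_exp.2 (by gcongr; exact hMle s)
  have hexp_pos : ∀ s : S, 0 < Real.exp (R s / lam) := fun s => Real.exp_pos _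
  -- the contraction map
  set F : (S → ℝ) → (S → ℝ) := fun v s =>
    Real.exp (R s / lam) *
      ((∑ s' : S, P s (Sum.inl s') * v s') + ∑ t : T, P s (Sum.inr t) * Real.exp (J t / lam))
    with hFdef
  have hPsum_le : ∀ s, (∑ s' : S, P s (Sum.inl s')) ≤ 1 := by
    intro s
    have h := hP1 s
    rw [Fintype.sum_sum_type] at h
    have h2 : (0:ℝ) ≤ ∑ t : T, P s (Sum.inr t) :=
      Finset.sum_nonneg fun t _ => hP0 s (Sum.inr t)
    linarith
  have hLip : LipschitzWith K F := by
    apply LipschitzWith.of_dist_le_mul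
    intro v w
    rw [dist_pi_le_iff (by positivity)]
    intro s
    have hdiff : F v s - F w s =
        Real.exp (R s / lam) * ∑ s' : S, P s (Sum.inl s') * (v s' - w s') := by
      simp only [hFdef]
      rw [← mul_sub, add_sub_add_right_eq_sub, ← Finset.sum_sub_distrib, Finset.mul_sum]
      rw [Finset.mul_sum]
      apply Finset.sum_congr rfl
      intro x _
      ring
    rw [Real.dist_eq, hdiff, abs_mul, abs_of_pos (hexp_pos s)]
    have hbound : |∑ s' : S, P s (Sum.inl s') * (v s' - w s')| ≤ dist v w := by
      calc |∑ s' : S, P s (Sum.inl s') * (v s' - w s')|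
          ≤ ∑ s' : S, |P s (Sum.inl s') * (v s' - w s')| := Finset.abs_sum_le_sum_abs _ _
        _ ≤ ∑ s' : S, P s (Sum.inl s') * dist v w := by
            apply Finset.sum_le_sum
            intro s' _
            rw [abs_mul, abs_of_nonneg (hP0 s (Sum.inl s'))]
            apply mul_le_mul_of_nonneg_left _ (hP0 s (Sum.inl s'))
            rw [← Real.dist_eq]
            exact dist_le_pi_dist v w s'
        _ = (∑ s' : S, P s (Sum.inl s')) * dist v w := by rw [← Finset.sum_mul]
        _ ≤ 1 * dist v w := mul_le_mul_of_nonneg_right (hPsum_le s) dist_nonneg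
        _ = dist v w := one_mul _
    calc Real.exp (R s / lam) * |∑ s' : S, P s (Sum.inl s') * (v s' - w s')|
        ≤ (K : ℝ) * dist v w := by
          apply mul_le_mul (hexpK s) hbound (abs_nonneg _) K.coe_nonneg
      _ = (K : ℝ) * dist v w := rfl
  have hC : ContractingWith K F := ⟨hK1, hLip⟩
  set v : S → ℝ := ContractingWith.fixedPoint F hC with hvdef
  have hv : F v = v := hC.fixedPoint_isFixedPt
  set z : S ⊕ T → ℝ := Sum.elim v (fun t => Real.exp (J t / lam)) with hzdef
  have hsum : ∀ (w : S ⊕ T → ℝ) s, (∑ x : S ⊕ T, P s x * w x) =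
      (∑ s' : S, P s (Sum.inl s') * w (Sum.inl s')) +
      (∑ t : T, P s (Sum.inr t) * w (Sum.inr t)) := by
    intro w s
    rw [Fintype.sum_sum_type]
  refine ⟨z, ⟨fun t => rfl, fun s => ?_⟩, ?_⟩
  · have : z (Sum.inl s) = F v s := by
      rw [hzdef]; simp only [Sum.elim_inl]
      conv_lhs => rw [← hv]
    rw [this, hFdef, hsum z s]
    simp [hzdef]
  · rintro z' ⟨hz'1, hz'2⟩
    have hfix : Function.IsFixedPt F (fun s => z' (Sum.inl s)) := by
      funext s
      rw [hFdef]
      simp only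
      rw [hz'2 s, hsum z' s]
      congr 2
      · apply Finset.sum_congr rfl
        intro t _
        rw [hz'1 t]
    have hv' : (fun s => z' (Sum.inl s)) = v := hC.fixedPoint_unique hfix
    funext x
    cases x with
    | inl s =>
        have := congrFun hv' s
        rw [hzdef]; simp only [Sum.elim_inl]; exact this
    | inr t =>
        rw [hz'1 t, hzdef]; simp
end

section
/- Let S_i ⊆ S with boundary set T_i, let b : T_i → ℝ satisfy b(t) ≥ 0 for all t ∈ T_i, and let z_i be a subtask Bellman solution with boundary values b. Then z_i(x) ≥ 0 for every x ∈ S_i ∪ T_i. -/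
open Classical

/-- The boundary set `T_i` of a subset `S_i ⊆ S`: all states `x ∈ S⁺ \ S_i` (terminal or not)
with `P(x|s) > 0` for some `s ∈ S_i`. -/
noncomputable def boundary {S T : Type} [Fintype S] [Fintype T]
    (P : S → S ⊕ T → ℝ) (Si : Finset S) : Finset (S ⊕ T) :=
  Finset.univ.filter fun x => (∀ s ∈ Si, x ≠ Sum.inl s) ∧ ∃ s ∈ Si, 0 < P s x

/-- `zi : S⁺ → ℝ` (only its values on `S_i ∪ T_i` matter) is a subtask Bellman solution for
`S_i ⊆ S` with boundary values `b` if `zi(t) = b(t)` for every `t ∈ T_i` and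
`zi(s) = exp(R(s)/λ)·Σ_x P(x|s)·zi(x)` for every `s ∈ S_i`  (for `s ∈ S_i`, `P(·|s)` is
supported on `S_i ∪ T_i`, so the sum only involves values of `zi` on `S_i ∪ T_i`). -/
def IsSubtaskSolution {S T : Type} [Fintype S] [Fintype T]
    (P : S → S ⊕ T → ℝ) (R : S → ℝ) (lam : ℝ) (Si : Finset S)
    (b : S ⊕ T → ℝ) (zi : S ⊕ T → ℝ) : Prop :=
  (∀ t ∈ boundary P Si, zi t = b t) ∧
  (∀ s ∈ Si, zi (Sum.inl s) = Real.exp (R s / lam) * ∑ x : S ⊕ T, P s x * zi x)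

/-- If the boundary values `b` are nonnegative on `T_i`, then any subtask Bellman
solution `z_i` with boundary values `b` satisfies `z_i(x) ≥ 0` for every `x ∈ S_i ∪ T_i`. -/
theorem statement5 {S T : Type} [Fintype S] [Nonempty S] [Fintype T]
    (P : S → S ⊕ T → ℝ) (R : S → ℝ) (lam : ℝ)
    (hP0 : ∀ s x, 0 ≤ P s x) (hP1 : ∀ s, ∑ x : S ⊕ T, P s x = 1)
    (hR : ∀ s, R s < 0) (hlam : 0 < lam)
    (Si : Finset S) (b : S ⊕ T → ℝ) (hb : ∀ t ∈ boundary P Si, 0 ≤ b t)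
    (zi : S ⊕ T → ℝ) (hzi : IsSubtaskSolution P R lam Si b zi) :
    ∀ x : S ⊕ T, ((∃ s ∈ Si, x = Sum.inl s) ∨ x ∈ boundary P Si) → 0 ≤ zi x := by
  obtain ⟨hbd, hbell⟩ := hzi
  set A : Finset (S ⊕ T) := Si.image Sum.inl ∪ boundary P Si with hA
  have hmem : ∀ x : S ⊕ T, ((∃ s ∈ Si, x = Sum.inl s) ∨ x ∈ boundary P Si) ↔ x ∈ A := by
    intro x
    simp [hA, Finset.mem_union, Finset.mem_image, eq_comm]
  suffices h : ∀ x ∈ A, 0 ≤ zi x by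
    intro x hx; exact h x ((hmem x).mp hx)
  rcases A.eq_empty_or_nonempty with hAe | hAne
  · intro x hx; rw [hAe] at hx; simp at hx
  intro x hx
  -- minimum of zi on A
  obtain ⟨x₀, hx₀A, hx₀min⟩ := A.exists_min_image zi hAne
  have hm : 0 ≤ zi x₀ := by
    by_contra hneg
    push_neg at hneg
    -- x₀ is not on the boundary
    have hx₀int : ∃ s ∈ Si, x₀ = Sum.inl s := by
      rcases (hmem x₀).mpr hx₀A with h | h
      · exact h
      · exact absurd (hbd x₀ h ▸ hb x₀ h) (not_le.mpr hneg)
    obtain ⟨s, hs, rfl⟩ := hx₀int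
    have hsupp : ∀ y : S ⊕ T, 0 < P s y → y ∈ A := by
      intro y hy
      by_cases hyc : ∃ s' ∈ Si, y = Sum.inl s'
      · exact (hmem y).mp (Or.inl hyc)
      · push_neg at hyc
        refine (hmem y).mp (Or.inr ?_)
        simp only [boundary, Finset.mem_filter, Finset.mem_univ, true_and]
        exact ⟨hyc, s, hs, hy⟩
    have hsum : zi (Sum.inl s) ≤ ∑ y : S ⊕ T, P s y * zi y := by
      calc zi (Sum.inl s) = ∑ y : S ⊕ T, P s y * zi (Sum.inl s) := by
            rw [← Finset.sum_mul, hP1 s, one_mul]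
        _ ≤ ∑ y : S ⊕ T, P s y * zi y := by
            apply Finset.sum_le_sum
            intro y _
            rcases lt_or_eq_of_le (hP0 s y) with hpos | heq
            · exact mul_le_mul_of_nonneg_left (hx₀min y (hsupp y hpos)) (le_of_lt hpos)
            · rw [← heq]; simp
    set c := Real.exp (R s / lam) with hc
    have hc0 : 0 < c := Real.exp_pos _
    have hc1 : c < 1 := by
      rw [hc, Real.exp_lt_one_iff]
      exact div_neg_of_neg_of_pos (hR s) hlam
    have heq := hbell s hs
    set Sg := ∑ y : S ⊕ T, P s y * zi y with hSg
    -- zi (inl s) = c * Sg, zi (inl s) < 0, Sg ≥ zi (inl s)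
    rcases le_or_gt 0 Sg with hSg0 | hSg0
    · have : 0 ≤ zi (Sum.inl s) := heq ▸ mul_nonneg (le_of_lt hc0) hSg0
      exact absurd this (not_le.mpr hneg)
    · have h1 : Sg < c * Sg := by
        nlinarith
      rw [← heq] at h1
      exact absurd (lt_of_le_of_lt hsum h1) (lt_irrefl _)
  exact le_trans hm (hx₀min x hx)
end

section
/- Let J_1,…,J_n : T → ℝ be terminal rewards with corresponding Bellman solutions z_1,…,z_n (all with the same S, T, P, R, λ). Let w_1,…,w_n ∈ ℝ and let J : T → ℝ satisfy exp(J(t)/λ) = Σ_{k=1}^n w_k·exp(J_k(t)/λ) for every t ∈ T. Then the Bellman solution for terminal reward J is z(x) = Σ_{k=1}^n w_k·z_k(x) for every x ∈ S⁺. -/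
open Classical

/-- compositionality: if `z_1,…,z_n` are Bellman solutions for terminal rewards
`J_1,…,J_n` (same `S, T, P, R, λ`) and `exp(J(t)/λ) = Σ_k w_k·exp(J_k(t)/λ)` for all `t ∈ T`,
then `x ↦ Σ_k w_k·z_k(x)` is the Bellman solution for terminal reward `J`. -/
theorem statement6 {S T : Type} [Fintype S] [Nonempty S] [Fintype T]
    (P : S → S ⊕ T → ℝ) (R : S → ℝ) (lam : ℝ)
    (hP0 : ∀ s x, 0 ≤ P s x) (hP1 : ∀ s, ∑ x : S ⊕ T, P s x = 1)
    (hR : ∀ s, R s < 0) (hlam : 0 < lam)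
    (n : ℕ) (Jk : Fin n → T → ℝ) (zk : Fin n → S ⊕ T → ℝ)
    (hzk : ∀ k, IsBellman P R (Jk k) lam (zk k))
    (w : Fin n → ℝ) (J : T → ℝ)
    (hJ : ∀ t, Real.exp (J t / lam) = ∑ k, w k * Real.exp (Jk k t / lam)) :
    IsBellman P R J lam (fun x => ∑ k, w k * zk k x) := by
  constructor
  · intro t
    simp only [hJ t]
    exact Finset.sum_congr rfl fun k _ => by rw [(hzk k).1 t]
  · intro s
    simp only
    calc ∑ k, w k * zk k (Sum.inl s)
        = ∑ k, ∑ x : S ⊕ T, Real.exp (R s / lam) * (P s x * (w k * zk k x)) := by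
          refine Finset.sum_congr rfl fun k _ => ?_
          rw [(hzk k).2 s]; rw [Finset.mul_sum, Finset.mul_sum]; exact Finset.sum_congr rfl fun x _ => by ring
      _ = ∑ x : S ⊕ T, Real.exp (R s / lam) * (P s x * ∑ k, w k * zk k x) := by
          rw [Finset.sum_comm]
          exact Finset.sum_congr rfl fun x _ => by rw [Finset.mul_sum, Finset.mul_sum]
      _ = Real.exp (R s / lam) * ∑ x : S ⊕ T, P s x * ∑ k, w k * zk k x := by
          rw [Finset.mul_sum]
end

section
/- Let z be a Bellman solution of the LMDP, let S_i ⊆ S with boundary set T_i, and let z_i be a subtask Bellman solution whose boundary values are b(t) = z(t) for every t ∈ T_i. Then z_i(s) = z(s) for every s ∈ S_i. -/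
open Classical

/-- if `z` is a Bellman solution of the LMDP and `z_i` is a subtask Bellman
solution for `S_i ⊆ S` whose boundary values agree with `z` on `T_i`, then `z_i(s) = z(s)`
for every `s ∈ S_i`. -/
theorem statement7 {S T : Type} [Fintype S] [Nonempty S] [Fintype T]
    (P : S → S ⊕ T → ℝ) (R : S → ℝ) (J : T → ℝ) (lam : ℝ)
    (hP0 : ∀ s x, 0 ≤ P s x) (hP1 : ∀ s, ∑ x : S ⊕ T, P s x = 1)
    (hR : ∀ s, R s < 0) (hlam : 0 < lam)
    (z : S ⊕ T → ℝ) (hz : IsBellman P R J lam z)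
    (Si : Finset S) (zi : S ⊕ T → ℝ)
    (hzi : IsSubtaskSolution P R lam Si z zi) :
    ∀ s ∈ Si, zi (Sum.inl s) = z (Sum.inl s) := by
  obtain ⟨hzb, hzis⟩ := hzi
  intro s hs
  rcases Si.eq_empty_or_nonempty with h | hne
  · simp [h] at hs
  set d : S ⊕ T → ℝ := fun x => zi x - z x with hd
  have hdb : ∀ x ∈ boundary P Si, d x = 0 := fun x hx => by simp [hd, hzb x hx]
  have hrec : ∀ s ∈ Si, d (Sum.inl s) = Real.exp (R s / lam) * ∑ x, P s x * d x := by
    intro s hs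
    simp only [hd]
    rw [hzis s hs, hz.2 s, ← mul_sub, ← Finset.sum_sub_distrib]
    congr 1
    exact Finset.sum_congr rfl fun x _ => by ring
  set M := Si.sup' hne (fun s => |d (Sum.inl s)|) with hM
  have hM0 : 0 ≤ M := by
    obtain ⟨s0, hs0⟩ := hne
    exact le_trans (abs_nonneg _) (hM ▸ Finset.le_sup' (fun s => |d (Sum.inl s)|) hs0)
  obtain ⟨s0, hs0, hs0M⟩ := Finset.exists_mem_eq_sup' hne (fun s => |d (Sum.inl s)|)
  have hle : ∀ s' ∈ Si, ∀ x, P s' x * |d x| ≤ P s' x * M := by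
    intro s' hs' x
    rcases eq_or_lt_of_le (hP0 s' x) with h0 | hpos
    · rw [← h0]; simp
    · apply mul_le_mul_of_nonneg_left _ (hP0 s' x)
      by_cases hx : ∃ s'' ∈ Si, x = Sum.inl s''
      · obtain ⟨s'', hs'', rfl⟩ := hx
        exact hM ▸ Finset.le_sup' (fun s => |d (Sum.inl s)|) hs''
      · have hxb : x ∈ boundary P Si := by
          simp only [boundary, Finset.mem_filter, Finset.mem_univ, true_and]
          refine ⟨fun s'' hs'' heq => hx ⟨s'', hs'', heq⟩, s', hs', hpos⟩
        rw [hdb x hxb]; simpa using hM0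
  have hc : Real.exp (R s0 / lam) < 1 := by
    rw [Real.exp_lt_one_iff]
    exact div_neg_of_neg_of_pos (hR s0) hlam
  have hbound : M ≤ Real.exp (R s0 / lam) * M := by
    calc M = |d (Sum.inl s0)| := hM.trans hs0M
    _ = Real.exp (R s0 / lam) * |∑ x, P s0 x * d x| := by
        rw [hrec s0 hs0, abs_mul, abs_of_pos (Real.exp_pos _)]
    _ ≤ Real.exp (R s0 / lam) * ∑ x, P s0 x * M := by
        apply mul_le_mul_of_nonneg_left _ (Real.exp_pos _).le
        calc |∑ x, P s0 x * d x| ≤ ∑ x, |P s0 x * d x| := Finset.abs_sum_le_sum_abs _ _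
        _ ≤ ∑ x, P s0 x * M := by
            apply Finset.sum_le_sum
            intro x _
            rw [abs_mul, abs_of_nonneg (hP0 s0 x)]
            exact hle s0 hs0 x
    _ = Real.exp (R s0 / lam) * M := by
        rw [← Finset.sum_mul, hP1 s0, one_mul]
  have hMz : M = 0 := by
    rcases eq_or_lt_of_le hM0 with h | hpos
    · exact h.symm
    · nlinarith
  have h1 : |d (Sum.inl s)| ≤ 0 := hMz ▸ hM ▸ Finset.le_sup' (fun s => |d (Sum.inl s)|) hs
  have h2 : d (Sum.inl s) = 0 := abs_eq_zero.mp (le_antisymm h1 (abs_nonneg _))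
  simpa [hd, sub_eq_zero] using h2
end

section
/- Let S_i ⊆ S with boundary set T_i = {t_1,…,t_n} and base solutions ζ_1,…,ζ_n. For any boundary values b : T_i → ℝ, the function z_i : S_i ∪ T_i → ℝ defined by z_i(x) = Σ_{k=1}^n b(t_k)·ζ_k(x) is the unique subtask Bellman solution with boundary values b. -/
open Classical

/-- enumerate `T_i = {t_1,…,t_n}` and let `ζ_1,…,ζ_n` be the base solutions
(`ζ_k` is the subtask Bellman solution with boundary values `1` at `t_k` and `0` at the other
boundary states). Then for any boundary values `b : T_i → ℝ`, the function
`x ↦ Σ_k b(t_k)·ζ_k(x)` is the unique subtask Bellman solution with boundary values `b`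
(unique as a function on `S_i ∪ T_i`). -/
theorem statement8 {S T : Type} [Fintype S] [Nonempty S] [Fintype T]
    (P : S → S ⊕ T → ℝ) (R : S → ℝ) (lam : ℝ)
    (hP0 : ∀ s x, 0 ≤ P s x) (hP1 : ∀ s, ∑ x : S ⊕ T, P s x = 1)
    (hR : ∀ s, R s < 0) (hlam : 0 < lam)
    (Si : Finset S) (n : ℕ) (t : Fin n → S ⊕ T)
    (htinj : Function.Injective t)
    (htrange : ∀ x : S ⊕ T, x ∈ boundary P Si ↔ ∃ k, t k = x)
    (zeta : Fin n → S ⊕ T → ℝ)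
    (hzeta : ∀ k, IsSubtaskSolution P R lam Si (fun x => if x = t k then 1 else 0) (zeta k))
    (b : S ⊕ T → ℝ) :
    IsSubtaskSolution P R lam Si b (fun x => ∑ k, b (t k) * zeta k x) ∧
    ∀ zi : S ⊕ T → ℝ, IsSubtaskSolution P R lam Si b zi →
      ∀ x : S ⊕ T, ((∃ s ∈ Si, x = Sum.inl s) ∨ x ∈ boundary P Si) →
        zi x = ∑ k, b (t k) * zeta k x := by
  classical
  set z : S ⊕ T → ℝ := fun x => ∑ k, b (t k) * zeta k x with hzdef
  have hz : IsSubtaskSolution P R lam Si b z := by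
    constructor
    · intro x hx
      obtain ⟨k0, hk0⟩ := (htrange x).1 hx
      have : z x = ∑ k, b (t k) * (if x = t k then 1 else 0) := by
        simp only [hzdef]
        refine Finset.sum_congr rfl fun k _ => ?_
        rw [(hzeta k).1 x hx]
      rw [this]
      have : ∀ k, (if x = t k then (1:ℝ) else 0) = if k = k0 then 1 else 0 := by
        intro k
        by_cases h : k = k0
        · subst h; simp [hk0.symm]
        · have : x ≠ t k := by
            intro he
            exact h (htinj (hk0.trans he)).symm
          simp [this, h]
      simp only [this]
      simp [hk0]
    · intro s hs
      have : z (Sum.inl s)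
          = ∑ k, b (t k) * (Real.exp (R s / lam) * ∑ x, P s x * zeta k x) := by
        simp only [hzdef]
        refine Finset.sum_congr rfl fun k _ => ?_
        rw [(hzeta k).2 s hs]
      rw [this]
      simp only [hzdef, Finset.mul_sum]
      rw [Finset.sum_comm]
      refine Finset.sum_congr rfl fun x _ => Finset.sum_congr rfl fun k _ => ?_
      ring
  refine ⟨hz, ?_⟩
  intro zi hzi
  -- difference function
  set d : S ⊕ T → ℝ := fun x => zi x - z x with hddef
  have hd_bd : ∀ x ∈ boundary P Si, d x = 0 := by
    intro x hx
    simp [hddef, hzi.1 x hx, hz.1 x hx]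
  have hd_bell : ∀ s ∈ Si,
      d (Sum.inl s) = Real.exp (R s / lam) * ∑ x, P s x * d x := by
    intro s hs
    have : (∑ x, P s x * d x) = (∑ x, P s x * zi x) - (∑ x, P s x * z x) := by
      rw [← Finset.sum_sub_distrib]
      refine Finset.sum_congr rfl fun x _ => by simp [hddef]; ring
    rw [this, hddef]
    simp only [hzi.2 s hs, hz.2 s hs]
    ring
  have hdzero : ∀ s ∈ Si, d (Sum.inl s) = 0 := by
    rcases Si.eq_empty_or_nonempty with hSi | hSi
    · simp [hSi]
    · set F := Si.image (fun s => |d (Sum.inl s)|) with hF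
      have hFne : F.Nonempty := hSi.image _
      set M := F.max' hFne with hM
      obtain ⟨s0, hs0, hs0M⟩ := Finset.mem_image.1 (F.max'_mem hFne)
      have hMle : ∀ s ∈ Si, |d (Sum.inl s)| ≤ M := fun s hs =>
        F.le_max' _ (Finset.mem_image_of_mem _ hs)
      have hM0 : 0 ≤ M := le_trans (abs_nonneg _) (hMle s0 hs0)
      have hexp : Real.exp (R s0 / lam) < 1 := by
        rw [Real.exp_lt_one_iff]
        exact div_neg_of_neg_of_pos (hR s0) hlam
      have hMboundkey : M ≤ Real.exp (R s0 / lam) * M := by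
        calc M = |d (Sum.inl s0)| := hs0M.symm
          _ = Real.exp (R s0 / lam) * |∑ x, P s0 x * d x| := by
              rw [hd_bell s0 hs0, abs_mul, abs_of_pos (Real.exp_pos _)]
          _ ≤ Real.exp (R s0 / lam) * ∑ x, |P s0 x * d x| := by
              exact mul_le_mul_of_nonneg_left (Finset.abs_sum_le_sum_abs _ _)
                (Real.exp_pos _).le
          _ ≤ Real.exp (R s0 / lam) * ∑ x, P s0 x * M := by
              refine mul_le_mul_of_nonneg_left ?_ (Real.exp_pos _).le
              refine Finset.sum_le_sum fun x _ => ?_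
              rw [abs_mul, abs_of_nonneg (hP0 s0 x)]
              by_cases hpx : P s0 x = 0
              · simp [hpx]
              · have hpxpos : 0 < P s0 x := lt_of_le_of_ne (hP0 s0 x) (Ne.symm hpx)
                refine mul_le_mul_of_nonneg_left ?_ (hP0 s0 x)
                by_cases hxin : ∃ s' ∈ Si, x = Sum.inl s'
                · obtain ⟨s', hs', rfl⟩ := hxin
                  exact hMle s' hs'
                · have hxbd : x ∈ boundary P Si := by
                    rw [boundary, Finset.mem_filter]
                    refine ⟨Finset.mem_univ _, fun s hs he => hxin ⟨s, hs, he⟩,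
                      ⟨s0, hs0, hpxpos⟩⟩
                  rw [hd_bd x hxbd]
                  simpa using hM0
          _ = Real.exp (R s0 / lam) * M := by
              rw [← Finset.sum_mul, hP1 s0, one_mul]
      have hMzero : M = 0 := by
        by_contra hMne
        have hMpos : 0 < M := lt_of_le_of_ne hM0 (Ne.symm hMne)
        have : Real.exp (R s0 / lam) * M < 1 * M :=
          mul_lt_mul_of_pos_right hexp hMpos
        rw [one_mul] at this
        exact absurd (lt_of_le_of_lt hMboundkey this) (lt_irrefl M)
      intro s hs
      have := hMle s hs
      rw [hMzero] at this
      exact abs_eq_zero.1 (le_antisymm this (abs_nonneg _))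
  intro x hx
  rcases hx with ⟨s, hs, rfl⟩ | hx
  · have := hdzero s hs
    simp only [hddef] at this
    linarith [this]
  · rw [hzi.1 x hx, ← hz.1 x hx]
end

section
/- Let S_i ⊆ S with boundary set T_i = {t_1,…,t_n} and base solutions ζ_1,…,ζ_n. Then for every x ∈ S_i ∪ T_i, 0 ≤ ζ_k(x) for each k and Σ_{k=1}^n ζ_k(x) ≤ 1. -/
open Classical

/-- A supersolution with nonnegative boundary values is nonnegative on `S_i`. -/
lemma supersol_nonneg {S T : Type} [Fintype S] [Fintype T]
    (P : S → S ⊕ T → ℝ) (R : S → ℝ) (lam : ℝ)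
    (hP0 : ∀ s x, 0 ≤ P s x) (hP1 : ∀ s, ∑ x : S ⊕ T, P s x = 1)
    (hR : ∀ s, R s < 0) (hlam : 0 < lam)
    (Si : Finset S) (v : S ⊕ T → ℝ)
    (hbd : ∀ x ∈ boundary P Si, 0 ≤ v x)
    (hsup : ∀ s ∈ Si, Real.exp (R s / lam) * ∑ x : S ⊕ T, P s x * v x ≤ v (Sum.inl s)) :
    ∀ s ∈ Si, 0 ≤ v (Sum.inl s) := by
  set A : Finset (S ⊕ T) := Si.image Sum.inl ∪ boundary P Si with hA
  have hmemA : ∀ s x, s ∈ Si → 0 < P s x → x ∈ A := by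
    intro s x hs hpx
    by_cases hx : ∃ s' ∈ Si, x = Sum.inl s'
    · obtain ⟨s', hs', rfl⟩ := hx
      exact Finset.mem_union_left _ (Finset.mem_image_of_mem _ hs')
    · refine Finset.mem_union_right _ ?_
      simp only [boundary, Finset.mem_filter, Finset.mem_univ, true_and]
      push_neg at hx
      exact ⟨hx, s, hs, hpx⟩
  intro s0 hs0
  have hAne : A.Nonempty := ⟨Sum.inl s0, Finset.mem_union_left _ (Finset.mem_image_of_mem _ hs0)⟩
  obtain ⟨a, haA, hamin⟩ := Finset.exists_min_image A v hAne
  have h0a : 0 ≤ v a := by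
    by_contra hneg
    push_neg at hneg
    rcases Finset.mem_union.1 haA with hint | hbdm
    · obtain ⟨s, hs, rfl⟩ := Finset.mem_image.1 hint
      have hγ : Real.exp (R s / lam) < 1 := by
        rw [Real.exp_lt_one_iff]
        exact div_neg_of_neg_of_pos (hR s) hlam
      have hsum : ∑ x : S ⊕ T, P s x * v (Sum.inl s) = v (Sum.inl s) := by
        rw [← Finset.sum_mul, hP1 s, one_mul]
      have h1 : ∑ x : S ⊕ T, P s x * v (Sum.inl s) ≤ ∑ x : S ⊕ T, P s x * v x := by
        apply Finset.sum_le_sum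
        intro x _
        rcases eq_or_lt_of_le (hP0 s x) with h | h
        · rw [← h]; simp
        · exact mul_le_mul_of_nonneg_left (hamin x (hmemA s x hs h)) (hP0 s x)
      have h2 := hsup s hs
      nlinarith [Real.exp_pos (R s / lam)]
    · exact absurd (hbd a hbdm) (not_le.2 hneg)
  exact le_trans h0a (hamin _ (Finset.mem_union_left _ (Finset.mem_image_of_mem _ hs0)))

/-- for the base solutions `ζ_1,…,ζ_n` of a subtask `S_i` with boundary
`T_i = {t_1,…,t_n}`, every `x ∈ S_i ∪ T_i` satisfies `0 ≤ ζ_k(x)` for each `k`, and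
`Σ_{k=1}^n ζ_k(x) ≤ 1`. -/
theorem statement9 {S T : Type} [Fintype S] [Nonempty S] [Fintype T]
    (P : S → S ⊕ T → ℝ) (R : S → ℝ) (lam : ℝ)
    (hP0 : ∀ s x, 0 ≤ P s x) (hP1 : ∀ s, ∑ x : S ⊕ T, P s x = 1)
    (hR : ∀ s, R s < 0) (hlam : 0 < lam)
    (Si : Finset S) (n : ℕ) (t : Fin n → S ⊕ T)
    (htinj : Function.Injective t)
    (htrange : ∀ x : S ⊕ T, x ∈ boundary P Si ↔ ∃ k, t k = x)
    (zeta : Fin n → S ⊕ T → ℝ)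
    (hzeta : ∀ k, IsSubtaskSolution P R lam Si (fun x => if x = t k then 1 else 0) (zeta k)) :
    ∀ x : S ⊕ T, ((∃ s ∈ Si, x = Sum.inl s) ∨ x ∈ boundary P Si) →
      (∀ k, 0 ≤ zeta k x) ∧ (∑ k, zeta k x) ≤ 1 := by
  have hbdnn : ∀ k, ∀ x ∈ boundary P Si, 0 ≤ zeta k x := by
    intro k x hx
    rw [(hzeta k).1 x hx]
    dsimp only
    split_ifs <;> norm_num
  have hzpos : ∀ k, ∀ s ∈ Si, 0 ≤ zeta k (Sum.inl s) := by
    intro k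
    exact supersol_nonneg P R lam hP0 hP1 hR hlam Si (zeta k) (hbdnn k)
      (fun s hs => le_of_eq ((hzeta k).2 s hs).symm)
  have hbsum : ∀ x ∈ boundary P Si, ∑ k, zeta k x = 1 := by
    intro x hx
    obtain ⟨k0, hk0⟩ := (htrange x).1 hx
    have hterm : ∀ k, zeta k x = if k = k0 then 1 else 0 := by
      intro k
      rw [(hzeta k).1 x hx]
      dsimp only
      by_cases hk : k = k0
      · subst hk
        rw [if_pos hk0.symm, if_pos rfl]
      · rw [if_neg, if_neg hk]
        intro hxk
        exact hk (htinj (hk0.trans hxk).symm)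
    rw [Finset.sum_congr rfl (fun k _ => hterm k)]
    simp
  have hW : ∀ s ∈ Si, 0 ≤ 1 - ∑ k, zeta k (Sum.inl s) := by
    apply supersol_nonneg P R lam hP0 hP1 hR hlam Si (fun x => 1 - ∑ k, zeta k x)
    · intro x hx
      rw [hbsum x hx]
      norm_num
    · intro s hs
      have hγ1 : Real.exp (R s / lam) ≤ 1 := by
        rw [Real.exp_le_one_iff]
        exact le_of_lt (div_neg_of_neg_of_pos (hR s) hlam)
      have hγ0 := Real.exp_pos (R s / lam)
      have hW_eq : ∑ k, zeta k (Sum.inl s)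
          = Real.exp (R s / lam) * ∑ x : S ⊕ T, P s x * ∑ k, zeta k x := by
        rw [Finset.sum_congr rfl (fun k _ => (hzeta k).2 s hs), ← Finset.mul_sum]
        congr 1
        rw [Finset.sum_comm]
        exact Finset.sum_congr rfl (fun x _ => (Finset.mul_sum _ _ _).symm)
      have hsplit : ∑ x : S ⊕ T, P s x * (1 - ∑ k, zeta k x)
          = 1 - ∑ x : S ⊕ T, P s x * ∑ k, zeta k x := by
        simp only [mul_sub, mul_one, Finset.sum_sub_distrib, hP1 s]
      show Real.exp (R s / lam) * ∑ x : S ⊕ T, P s x * (1 - ∑ k, zeta k x)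
          ≤ 1 - ∑ k, zeta k (Sum.inl s)
      rw [hsplit, hW_eq]
      set γ := Real.exp (R s / lam)
      set Q := ∑ x : S ⊕ T, P s x * ∑ k, zeta k x
      nlinarith
  intro x hx
  rcases hx with ⟨s, hs, rfl⟩ | hxb
  · exact ⟨fun k => hzpos k s hs, by linarith [hW s hs]⟩
  · exact ⟨fun k => hbdnn k x hxb, le_of_eq (hbsum x hxb)⟩
end

section
/- Let S_i ⊆ S with boundary set T_i = {t_1,…,t_n} and base solutions ζ_1,…,ζ_n. Then for every non-terminal subtask state s ∈ S_i, Σ_{k=1}^n ζ_k(s) ≤ exp(R(s)/λ) < 1. -/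
open Classical

/-- for the base solutions `ζ_1,…,ζ_n` of a subtask `S_i` with boundary
`T_i = {t_1,…,t_n}`, every non-terminal subtask state `s ∈ S_i` satisfies
`Σ_{k=1}^n ζ_k(s) ≤ exp(R(s)/λ) < 1`. -/
theorem statement10 {S T : Type} [Fintype S] [Nonempty S] [Fintype T]
    (P : S → S ⊕ T → ℝ) (R : S → ℝ) (lam : ℝ)
    (hP0 : ∀ s x, 0 ≤ P s x) (hP1 : ∀ s, ∑ x : S ⊕ T, P s x = 1)
    (hR : ∀ s, R s < 0) (hlam : 0 < lam)
    (Si : Finset S) (n : ℕ) (t : Fin n → S ⊕ T)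
    (htinj : Function.Injective t)
    (htrange : ∀ x : S ⊕ T, x ∈ boundary P Si ↔ ∃ k, t k = x)
    (zeta : Fin n → S ⊕ T → ℝ)
    (hzeta : ∀ k, IsSubtaskSolution P R lam Si (fun x => if x = t k then 1 else 0) (zeta k)) :
    ∀ s ∈ Si, (∑ k, zeta k (Sum.inl s)) ≤ Real.exp (R s / lam) ∧ Real.exp (R s / lam) < 1 := by
  intro s hs
  have hSne : Si.Nonempty := ⟨s, hs⟩
  set Z : S ⊕ T → ℝ := fun x => ∑ k, zeta k x with hZ
  have hZb : ∀ x ∈ boundary P Si, Z x = 1 := by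
    intro x hx
    obtain ⟨k0, hk0⟩ := (htrange x).1 hx
    have h1 : Z x = ∑ k, if x = t k then (1:ℝ) else 0 :=
      Finset.sum_congr rfl fun k _ => (hzeta k).1 x hx
    have h2 : ∀ k : Fin n, (x = t k) ↔ (k = k0) := by
      intro k
      constructor
      · intro h; exact htinj (by rw [hk0, ← h])
      · intro h; rw [h, hk0]
    rw [h1]
    simp only [h2]
    simp
  have hZbell : ∀ s' ∈ Si, Z (Sum.inl s') = Real.exp (R s' / lam) * ∑ x, P s' x * Z x := by
    intro s' hs'
    have h1 : Z (Sum.inl s') = ∑ k, Real.exp (R s' / lam) * ∑ x, P s' x * zeta k x :=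
      Finset.sum_congr rfl fun k _ => (hzeta k).2 s' hs'
    rw [h1, ← Finset.mul_sum]
    congr 1
    rw [Finset.sum_comm]
    exact Finset.sum_congr rfl fun x _ => by rw [Finset.mul_sum]
  have hsupp : ∀ s' ∈ Si, ∀ x, 0 < P s' x →
      x ∈ boundary P Si ∨ ∃ s'' ∈ Si, x = Sum.inl s'' := by
    intro s' hs' x hx
    by_cases h : ∃ s'' ∈ Si, x = Sum.inl s''
    · exact Or.inr h
    · left
      simp only [boundary, Finset.mem_filter, Finset.mem_univ, true_and]
      exact ⟨fun u hu hxu => h ⟨u, hu, hxu⟩, s', hs', hx⟩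
  set M' := Si.sup' hSne (fun u => Z (Sum.inl u)) with hM'
  set M := max M' 1 with hM
  have hMpos : (0:ℝ) < M := lt_of_lt_of_le one_pos (le_max_right _ _)
  have hZleM : ∀ s' ∈ Si, ∀ x, P s' x * Z x ≤ P s' x * M := by
    intro s' hs' x
    rcases lt_or_eq_of_le (hP0 s' x) with hpos | heq
    · apply mul_le_mul_of_nonneg_left _ (hP0 s' x)
      rcases hsupp s' hs' x hpos with hb | ⟨u, hu, rfl⟩
      · rw [hZb x hb]; exact le_max_right _ _
      · exact le_trans (by rw [hM']; exact Finset.le_sup' (fun u => Z (Sum.inl u)) hu) (le_max_left _ _)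
    · rw [← heq]; simp
  have key : ∀ s' ∈ Si, Z (Sum.inl s') ≤ Real.exp (R s' / lam) * M := by
    intro s' hs'
    rw [hZbell s' hs']
    apply mul_le_mul_of_nonneg_left _ (Real.exp_pos _).le
    calc ∑ x, P s' x * Z x ≤ ∑ x, P s' x * M :=
          Finset.sum_le_sum (fun x _ => hZleM s' hs' x)
      _ = M := by rw [← Finset.sum_mul, hP1, one_mul]
  have hexp : ∀ s' : S, Real.exp (R s' / lam) < 1 := by
    intro s'
    rw [Real.exp_lt_one_iff]
    exact div_neg_of_neg_of_pos (hR s') hlam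
  have hM1 : M = 1 := by
    by_contra h
    have hM'gt : 1 < M' := by
      rcases lt_or_ge 1 M' with h1 | h1
      · exact h1
      · exact absurd (max_eq_right h1) h
    have hMM' : M = M' := max_eq_left hM'gt.le
    set eps := Si.sup' hSne (fun u => Real.exp (R u / lam)) with heps
    have heps1 : eps < 1 := by
      rw [Finset.sup'_lt_iff]
      intro u _; exact hexp u
    have hle : M' ≤ eps * M' := by
      rw [hM']
      rw [Finset.sup'_le_iff]
      intro u hu
      calc Z (Sum.inl u) ≤ Real.exp (R u / lam) * M := key u hu
        _ ≤ eps * M := mul_le_mul_of_nonneg_right (by rw [heps]; exact Finset.le_sup' (fun u => Real.exp (R u / lam)) hu) hMpos.le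
        _ = eps * M' := by rw [hMM']
    nlinarith
  have h1 := key s hs
  rw [hM1, mul_one] at h1
  exact ⟨h1, hexp s⟩
end

section
/- Let z be the Bellman solution of the LMDP. Then the restriction of z to the exit set E solves the exit system; that is, z(t) = exp(J(t)/λ) for every t ∈ E ∩ T, and for every non-terminal exit s ∈ E ∩ S with s ∈ S_i, z(s) = Σ_{t∈T_i} ζ^{(i)}_t(s)·z(t). -/
open Classical

/-- The exit set `E = T_1 ∪ … ∪ T_L` associated with a partition `S = S_1 ∪ … ∪ S_L`. -/
def exitSet {S T : Type} [Fintype S] [Fintype T]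
    (P : S → S ⊕ T → ℝ) {L : ℕ} (Si : Fin L → Finset S) : Set (S ⊕ T) :=
  {x | ∃ i, x ∈ boundary P (Si i)}

/-- `y : E → ℝ` (only its values on the exit set `E` matter) solves the exit system if
`y(t) = exp(J(t)/λ)` for every `t ∈ E ∩ T`, and for every non-terminal exit `s ∈ E ∩ S` with
`s ∈ S_i`, `y(s) = Σ_{t∈T_i} ζ^{(i)}_t(s)·y(t)`. -/
def SolvesExitSystem {S T : Type} [Fintype S] [Fintype T]
    (P : S → S ⊕ T → ℝ) (J : T → ℝ) (lam : ℝ) {L : ℕ} (Si : Fin L → Finset S)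
    (zeta : Fin L → (S ⊕ T) → (S ⊕ T) → ℝ) (y : S ⊕ T → ℝ) : Prop :=
  (∀ t : T, Sum.inr t ∈ exitSet P Si → y (Sum.inr t) = Real.exp (J t / lam)) ∧
  (∀ i : Fin L, ∀ s ∈ Si i, Sum.inl s ∈ exitSet P Si →
    y (Sum.inl s) = ∑ t ∈ boundary P (Si i), zeta i t (Sum.inl s) * y t)

/-- if `z` is the Bellman solution of the LMDP, then the restriction of `z` to
the exit set `E` solves the exit system: `z(t) = exp(J(t)/λ)` for every `t ∈ E ∩ T`, and for
every non-terminal exit `s ∈ E ∩ S` with `s ∈ S_i`, `z(s) = Σ_{t∈T_i} ζ^{(i)}_t(s)·z(t)`.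
Here `S_1,…,S_L` is a partition of `S` and `ζ^{(i)}_t` is the base solution of subtask `S_i`
for boundary state `t ∈ T_i`. -/
theorem statement11 {S T : Type} [Fintype S] [Nonempty S] [Fintype T]
    (P : S → S ⊕ T → ℝ) (R : S → ℝ) (J : T → ℝ) (lam : ℝ)
    (hP0 : ∀ s x, 0 ≤ P s x) (hP1 : ∀ s, ∑ x : S ⊕ T, P s x = 1)
    (hR : ∀ s, R s < 0) (hlam : 0 < lam)
    (L : ℕ) (Si : Fin L → Finset S)
    (hdisj : ∀ i j, i ≠ j → Disjoint (Si i) (Si j))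
    (hcover : ∀ s : S, ∃ i, s ∈ Si i)
    (zeta : Fin L → (S ⊕ T) → (S ⊕ T) → ℝ)
    (hzeta : ∀ i, ∀ t ∈ boundary P (Si i),
      IsSubtaskSolution P R lam (Si i) (fun x => if x = t then 1 else 0) (zeta i t))
    (z : S ⊕ T → ℝ) (hz : IsBellman P R J lam z) :
    SolvesExitSystem P J lam Si zeta z := by
  obtain ⟨hzT, hzS⟩ := hz
  refine ⟨fun t _ => hzT t, ?_⟩
  intro i s hs _
  set Ti := boundary P (Si i) with hTidef
  set w : S ⊕ T → ℝ := fun x => z x - ∑ t ∈ Ti, zeta i t x * z t with hwdef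
  -- w vanishes on the boundary
  have hwT : ∀ t ∈ Ti, w t = 0 := by
    intro t ht
    have hsum : ∑ t' ∈ Ti, zeta i t' t * z t' = z t := by
      rw [Finset.sum_eq_single t]
      · rw [(hzeta i t ht).1 t ht]; simp
      · intro t' ht' hne
        rw [(hzeta i t' ht').1 t ht]
        simp [Ne.symm hne]
      · intro h; exact absurd ht h
    simp only [hwdef]
    linarith [hsum]
  -- support of P s' within Si ∪ Ti
  have hsupp : ∀ s' ∈ Si i, ∀ x, P s' x ≠ 0 → (∃ u ∈ Si i, x = Sum.inl u) ∨ x ∈ Ti := by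
    intro s' hs' x hPx
    by_cases hx : ∃ u ∈ Si i, x = Sum.inl u
    · exact Or.inl hx
    · right
      rw [hTidef, boundary, Finset.mem_filter]
      refine ⟨Finset.mem_univ _, fun u hu hxu => hx ⟨u, hu, hxu⟩,
        s', hs', lt_of_le_of_ne (hP0 s' x) (Ne.symm hPx)⟩
  -- w satisfies the Bellman equation on Si
  have hwS : ∀ s' ∈ Si i, w (Sum.inl s')
      = Real.exp (R s' / lam) * ∑ x : S ⊕ T, P s' x * w x := by
    intro s' hs'
    have hz' : ∀ t ∈ Ti, zeta i t (Sum.inl s')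
        = Real.exp (R s' / lam) * ∑ x : S ⊕ T, P s' x * zeta i t x :=
      fun t ht => (hzeta i t ht).2 s' hs'
    have expand : ∑ x : S ⊕ T, P s' x * w x
        = (∑ x : S ⊕ T, P s' x * z x)
          - ∑ t ∈ Ti, (∑ x : S ⊕ T, P s' x * zeta i t x) * z t := by
      simp only [hwdef, mul_sub, Finset.mul_sum]
      rw [Finset.sum_sub_distrib, Finset.sum_comm]
      congr 1
      apply Finset.sum_congr rfl
      intro t _
      rw [Finset.sum_mul]
      apply Finset.sum_congr rfl
      intro x _
      ring
    simp only [hwdef]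
    rw [hzS s', expand, mul_sub]
    congr 1
    rw [Finset.mul_sum]
    apply Finset.sum_congr rfl
    intro t ht
    rw [hz' t ht]
    ring
  -- maximum argument
  obtain ⟨s₀, hs₀, hmax⟩ := (Si i).exists_max_image (fun u => |w (Sum.inl u)|) ⟨s, hs⟩
  set M := |w (Sum.inl s₀)| with hMdef
  have hM0 : (0:ℝ) ≤ M := abs_nonneg _
  have hρpos : (0:ℝ) < Real.exp (R s₀ / lam) := Real.exp_pos _
  have hρlt : Real.exp (R s₀ / lam) < 1 := by
    rw [Real.exp_lt_one_iff]
    exact div_neg_of_neg_of_pos (hR s₀) hlam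
  have hbound : ∀ x : S ⊕ T, |P s₀ x * w x| ≤ P s₀ x * M := by
    intro x
    by_cases hPx : P s₀ x = 0
    · simp [hPx, hM0]
    · rw [abs_mul, abs_of_nonneg (hP0 s₀ x)]
      apply mul_le_mul_of_nonneg_left _ (hP0 s₀ x)
      rcases hsupp s₀ hs₀ x hPx with ⟨u, hu, rfl⟩ | hxT
      · exact hmax u hu
      · rw [hwT x hxT]; simpa using hM0
  have hsumb : |∑ x : S ⊕ T, P s₀ x * w x| ≤ M := by
    calc |∑ x : S ⊕ T, P s₀ x * w x| ≤ ∑ x : S ⊕ T, |P s₀ x * w x| :=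
          Finset.abs_sum_le_sum_abs _ _
      _ ≤ ∑ x : S ⊕ T, P s₀ x * M := Finset.sum_le_sum (fun x _ => hbound x)
      _ = (∑ x : S ⊕ T, P s₀ x) * M := by rw [← Finset.sum_mul]
      _ = M := by rw [hP1 s₀, one_mul]
  have hMle : M ≤ Real.exp (R s₀ / lam) * M := by
    calc M = |w (Sum.inl s₀)| := rfl
      _ = |Real.exp (R s₀ / lam) * ∑ x : S ⊕ T, P s₀ x * w x| := by rw [hwS s₀ hs₀]
      _ = Real.exp (R s₀ / lam) * |∑ x : S ⊕ T, P s₀ x * w x| := by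
          rw [abs_mul, abs_of_pos hρpos]
      _ ≤ Real.exp (R s₀ / lam) * M := by
          exact mul_le_mul_of_nonneg_left hsumb hρpos.le
  have hMz : M = 0 := by nlinarith
  have hws : w (Sum.inl s) = 0 := by
    have h1 := hmax s hs
    have h2 : (0:ℝ) ≤ |w (Sum.inl s)| := abs_nonneg _
    have : |w (Sum.inl s)| = 0 := le_antisymm (hMz ▸ h1) h2
    exact abs_eq_zero.mp this
  simp only [hwdef] at hws
  linarith [hws]
end

section
/- Let y : E → ℝ solve the exit system. Define ẑ : S⁺ → ℝ by ẑ(t) = exp(J(t)/λ) for t ∈ T, and ẑ(s) = Σ_{t∈T_i} ζ^{(i)}_t(s)·y(t) for s ∈ S belonging to partition element S_i. Then ẑ is a Bellman solution of the LMDP and ẑ agrees with y on E. -/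
open Classical

/-- if `y : E → ℝ` solves the exit system, then the function `ẑ : S⁺ → ℝ` defined
by `ẑ(t) = exp(J(t)/λ)` for `t ∈ T` and `ẑ(s) = Σ_{t∈T_i} ζ^{(i)}_t(s)·y(t)` for `s ∈ S_i`
is a Bellman solution of the LMDP, and `ẑ` agrees with `y` on `E`. -/
theorem statement12 {S T : Type} [Fintype S] [Nonempty S] [Fintype T]
    (P : S → S ⊕ T → ℝ) (R : S → ℝ) (J : T → ℝ) (lam : ℝ)
    (hP0 : ∀ s x, 0 ≤ P s x) (hP1 : ∀ s, ∑ x : S ⊕ T, P s x = 1)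
    (hR : ∀ s, R s < 0) (hlam : 0 < lam)
    (L : ℕ) (Si : Fin L → Finset S)
    (hdisj : ∀ i j, i ≠ j → Disjoint (Si i) (Si j))
    (hcover : ∀ s : S, ∃ i, s ∈ Si i)
    (zeta : Fin L → (S ⊕ T) → (S ⊕ T) → ℝ)
    (hzeta : ∀ i, ∀ t ∈ boundary P (Si i),
      IsSubtaskSolution P R lam (Si i) (fun x => if x = t then 1 else 0) (zeta i t))
    (y : S ⊕ T → ℝ) (hy : SolvesExitSystem P J lam Si zeta y)
    (zhat : S ⊕ T → ℝ)
    (hzhatT : ∀ t : T, zhat (Sum.inr t) = Real.exp (J t / lam))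
    (hzhatS : ∀ i : Fin L, ∀ s ∈ Si i,
      zhat (Sum.inl s) = ∑ t ∈ boundary P (Si i), zeta i t (Sum.inl s) * y t) :
    IsBellman P R J lam zhat ∧ ∀ x ∈ exitSet P Si, zhat x = y x := by
  have hE : ∀ x ∈ exitSet P Si, zhat x = y x := by
    rintro (s | t) hx
    · obtain ⟨j, hj⟩ := hcover s
      rw [hzhatS j s hj, hy.2 j s hj hx]
    · rw [hzhatT t, hy.1 t hx]
  refine ⟨⟨hzhatT, ?_⟩, hE⟩
  intro s
  obtain ⟨i, hi⟩ := hcover s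
  have hterm : ∀ x : S ⊕ T,
      P s x * ∑ t ∈ boundary P (Si i), zeta i t x * y t = P s x * zhat x := by
    intro x
    rcases (hP0 s x).eq_or_lt with h0 | hpos
    · rw [← h0, zero_mul, zero_mul]
    congr 1
    by_cases hx : ∃ s' ∈ Si i, x = Sum.inl s'
    · obtain ⟨s', hs', rfl⟩ := hx
      rw [hzhatS i s' hs']
    · have hxb : x ∈ boundary P (Si i) := by
        simp only [boundary, Finset.mem_filter, Finset.mem_univ, true_and]
        exact ⟨fun s'' hs'' hne => hx ⟨s'', hs'', hne⟩, ⟨s, hi, hpos⟩⟩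
      have : ∑ t ∈ boundary P (Si i), zeta i t x * y t
          = ∑ t ∈ boundary P (Si i), (if x = t then 1 else 0) * y t :=
        Finset.sum_congr rfl fun t ht => by rw [(hzeta i t ht).1 x hxb]
      rw [this, hE x ⟨i, hxb⟩]
      simp [ite_mul, Finset.sum_ite_eq, hxb]
  calc zhat (Sum.inl s)
      = ∑ t ∈ boundary P (Si i), zeta i t (Sum.inl s) * y t := hzhatS i s hi
    _ = ∑ t ∈ boundary P (Si i),
          (Real.exp (R s / lam) * ∑ x : S ⊕ T, P s x * zeta i t x) * y t :=
        Finset.sum_congr rfl fun t ht => by rw [(hzeta i t ht).2 s hi]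
    _ = ∑ t ∈ boundary P (Si i), ∑ x : S ⊕ T,
          Real.exp (R s / lam) * (P s x * zeta i t x * y t) := by
        refine Finset.sum_congr rfl fun t _ => ?_
        rw [Finset.mul_sum, Finset.sum_mul]
        exact Finset.sum_congr rfl fun x _ => by ring
    _ = ∑ x : S ⊕ T, ∑ t ∈ boundary P (Si i),
          Real.exp (R s / lam) * (P s x * zeta i t x * y t) := Finset.sum_comm
    _ = Real.exp (R s / lam) *
          ∑ x : S ⊕ T, ∑ t ∈ boundary P (Si i), P s x * zeta i t x * y t := by
        simp only [← Finset.mul_sum]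
    _ = Real.exp (R s / lam) * ∑ x : S ⊕ T, P s x * zhat x := by
        congr 1
        refine Finset.sum_congr rfl fun x _ => ?_
        rw [← hterm x, Finset.mul_sum]
        exact Finset.sum_congr rfl fun t _ => by ring
end

section
/- The exit system has exactly one solution y : E → ℝ, namely the restriction to E of the unique Bellman solution z of the LMDP. -/
open Classical

lemma subtask_uniq {S T : Type} [Fintype S] [Fintype T]
    (P : S → S ⊕ T → ℝ) (R : S → ℝ) (lam : ℝ)
    (hP0 : ∀ s x, 0 ≤ P s x) (hP1 : ∀ s, ∑ x : S ⊕ T, P s x = 1)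
    (hR : ∀ s, R s < 0) (hlam : 0 < lam)
    (Si : Finset S) (u v : S ⊕ T → ℝ)
    (hbnd : ∀ t ∈ boundary P Si, u t = v t)
    (hu : ∀ s ∈ Si, u (Sum.inl s) = Real.exp (R s / lam) * ∑ x : S ⊕ T, P s x * u x)
    (hv : ∀ s ∈ Si, v (Sum.inl s) = Real.exp (R s / lam) * ∑ x : S ⊕ T, P s x * v x) :
    ∀ s ∈ Si, u (Sum.inl s) = v (Sum.inl s) := by
  rcases Si.eq_empty_or_nonempty with h | hne
  · simp [h]
  obtain ⟨s0, hs0, hmax⟩ := Si.exists_max_image (fun s => |u (Sum.inl s) - v (Sum.inl s)|) hne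
  set M := |u (Sum.inl s0) - v (Sum.inl s0)| with hM
  have hM0 : 0 ≤ M := abs_nonneg _
  have hbd : ∀ x, P s0 x * |u x - v x| ≤ P s0 x * M := by
    intro x
    rcases eq_or_lt_of_le (hP0 s0 x) with h0 | hpos
    · simp [← h0]
    apply mul_le_mul_of_nonneg_left _ (hP0 s0 x)
    by_cases hx : ∃ s' ∈ Si, x = Sum.inl s'
    · obtain ⟨s', hs', rfl⟩ := hx
      exact hmax s' hs'
    · have hxb : x ∈ boundary P Si := by
        simp only [boundary, Finset.mem_filter, Finset.mem_univ, true_and]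
        exact ⟨fun s hs he => hx ⟨s, hs, he⟩, ⟨s0, hs0, hpos⟩⟩
      rw [hbnd x hxb]
      simpa using hM0
  have hc : Real.exp (R s0 / lam) < 1 := by
    rw [Real.exp_lt_one_iff]
    exact div_neg_of_neg_of_pos (hR s0) hlam
  have key : M ≤ Real.exp (R s0 / lam) * M := by
    calc M = |Real.exp (R s0 / lam) * ∑ x : S ⊕ T, P s0 x * (u x - v x)| := by
          rw [hM, hu s0 hs0, hv s0 hs0, ← mul_sub, ← Finset.sum_sub_distrib]
          congr 1
          congr 1
          exact Finset.sum_congr rfl fun x _ => by ring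
    _ = Real.exp (R s0 / lam) * |∑ x : S ⊕ T, P s0 x * (u x - v x)| := by
          rw [abs_mul, abs_of_pos (Real.exp_pos _)]
    _ ≤ Real.exp (R s0 / lam) * ∑ x : S ⊕ T, P s0 x * |u x - v x| := by
          apply mul_le_mul_of_nonneg_left _ (Real.exp_pos _).le
          refine (Finset.abs_sum_le_sum_abs _ _).trans ?_
          apply Finset.sum_le_sum
          intro x _
          rw [abs_mul, abs_of_nonneg (hP0 s0 x)]
    _ ≤ Real.exp (R s0 / lam) * ∑ x : S ⊕ T, P s0 x * M := by
          exact mul_le_mul_of_nonneg_left (Finset.sum_le_sum fun x _ => hbd x) (Real.exp_pos _).le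
    _ = Real.exp (R s0 / lam) * M := by rw [← Finset.sum_mul, hP1 s0, one_mul]
  have hMz : M = 0 := by nlinarith
  intro s hs
  have h1 := hmax s hs
  rw [hMz] at h1
  linarith [sub_eq_zero.mp (abs_nonpos_iff.mp h1)]

lemma combo {S T : Type} [Fintype S] [Fintype T]
    (P : S → S ⊕ T → ℝ) (R : S → ℝ) (lam : ℝ)
    (Si : Finset S) (zeta : (S ⊕ T) → (S ⊕ T) → ℝ)
    (hzeta : ∀ t ∈ boundary P Si,
      IsSubtaskSolution P R lam Si (fun x => if x = t then 1 else 0) (zeta t))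
    (c : S ⊕ T → ℝ) :
    (∀ t0 ∈ boundary P Si, (∑ t ∈ boundary P Si, zeta t t0 * c t) = c t0) ∧
    (∀ s ∈ Si, (∑ t ∈ boundary P Si, zeta t (Sum.inl s) * c t)
      = Real.exp (R s / lam) * ∑ x : S ⊕ T, P s x * ∑ t ∈ boundary P Si, zeta t x * c t) := by
  constructor
  · intro t0 ht0
    have h : ∀ t ∈ boundary P Si, zeta t t0 * c t = if t0 = t then c t else 0 := by
      intro t ht
      rw [(hzeta t ht).1 t0 ht0]
      by_cases h : t0 = t <;> simp [h]
    rw [Finset.sum_congr rfl h, Finset.sum_ite_eq (boundary P Si) t0 c, if_pos ht0]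
  · intro s hs
    calc ∑ t ∈ boundary P Si, zeta t (Sum.inl s) * c t
        = ∑ t ∈ boundary P Si,
            Real.exp (R s / lam) * ∑ x : S ⊕ T, P s x * (zeta t x * c t) := by
          refine Finset.sum_congr rfl fun t ht => ?_
          rw [(hzeta t ht).2 s hs, mul_assoc]
          congr 1
          rw [Finset.sum_mul]
          exact Finset.sum_congr rfl fun x _ => mul_assoc _ _ _
    _ = Real.exp (R s / lam) * ∑ x : S ⊕ T, P s x * ∑ t ∈ boundary P Si, zeta t x * c t := by
          rw [← Finset.mul_sum, Finset.sum_comm]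
          congr 1
          exact Finset.sum_congr rfl fun x _ => (Finset.mul_sum _ _ _).symm


/-- the exit system has exactly one solution `y : E → ℝ` (functions on `S⁺` are
compared on `E`, where they are determined), namely the restriction to `E` of the unique
Bellman solution `z` of the LMDP. -/
theorem statement13 {S T : Type} [Fintype S] [Nonempty S] [Fintype T]
    (P : S → S ⊕ T → ℝ) (R : S → ℝ) (J : T → ℝ) (lam : ℝ)
    (hP0 : ∀ s x, 0 ≤ P s x) (hP1 : ∀ s, ∑ x : S ⊕ T, P s x = 1)
    (hR : ∀ s, R s < 0) (hlam : 0 < lam)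
    (L : ℕ) (Si : Fin L → Finset S)
    (hdisj : ∀ i j, i ≠ j → Disjoint (Si i) (Si j))
    (hcover : ∀ s : S, ∃ i, s ∈ Si i)
    (zeta : Fin L → (S ⊕ T) → (S ⊕ T) → ℝ)
    (hzeta : ∀ i, ∀ t ∈ boundary P (Si i),
      IsSubtaskSolution P R lam (Si i) (fun x => if x = t then 1 else 0) (zeta i t))
    (z : S ⊕ T → ℝ) (hz : IsBellman P R J lam z)
    (huniq : ∀ z' : S ⊕ T → ℝ, IsBellman P R J lam z' → z' = z) :
    SolvesExitSystem P J lam Si zeta z ∧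
    ∀ y : S ⊕ T → ℝ, SolvesExitSystem P J lam Si zeta y →
      ∀ x ∈ exitSet P Si, y x = z x := by
  have part1 : SolvesExitSystem P J lam Si zeta z := by
    constructor
    · intro t _
      exact hz.1 t
    · intro i s hs _
      have hcombo := combo P R lam (Si i) (zeta i) (hzeta i) z
      exact subtask_uniq P R lam hP0 hP1 hR hlam (Si i) z
        (fun x => ∑ t ∈ boundary P (Si i), zeta i t x * z t)
        (fun t ht => (hcombo.1 t ht).symm) (fun s _ => hz.2 s) hcombo.2 s hs
  refine ⟨part1, ?_⟩
  intro y hy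
  have hiu : ∀ (s : S) (j : Fin L), s ∈ Si j → (hcover s).choose = j := by
    intro s j hj
    by_contra hne
    exact (Finset.disjoint_left.mp (hdisj _ _ hne) (hcover s).choose_spec) hj
  set z' : S ⊕ T → ℝ := Sum.elim
    (fun s => ∑ t ∈ boundary P (Si (hcover s).choose),
      zeta (hcover s).choose t (Sum.inl s) * y t)
    (fun t => Real.exp (J t / lam)) with hz'def
  have yz' : ∀ x ∈ exitSet P Si, y x = z' x := by
    intro x hx
    cases x with
    | inr t => exact hy.1 t hx
    | inl s => exact hy.2 (hcover s).choose s (hcover s).choose_spec hx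
  have hB : IsBellman P R J lam z' := by
    constructor
    · intro t
      rfl
    · intro s
      have hsi : s ∈ Si (hcover s).choose := (hcover s).choose_spec
      have hcombo := combo P R lam (Si (hcover s).choose) (zeta (hcover s).choose)
        (hzeta (hcover s).choose) y
      have h1 : z' (Sum.inl s) = ∑ t ∈ boundary P (Si (hcover s).choose),
          zeta (hcover s).choose t (Sum.inl s) * y t := rfl
      rw [h1, hcombo.2 s hsi]
      congr 1
      apply Finset.sum_congr rfl
      intro x _
      rcases eq_or_lt_of_le (hP0 s x) with h0 | hpos
      · rw [← h0]
        ring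
      congr 1
      by_cases hxI : ∃ s' ∈ Si (hcover s).choose, x = Sum.inl s'
      · obtain ⟨s', hs', rfl⟩ := hxI
        have he : (hcover s').choose = (hcover s).choose := hiu s' _ hs'
        show _ = ∑ t ∈ boundary P (Si (hcover s').choose),
          zeta (hcover s').choose t (Sum.inl s') * y t
        rw [he]
      · have hxb : x ∈ boundary P (Si (hcover s).choose) := by
          simp only [boundary, Finset.mem_filter, Finset.mem_univ, true_and]
          exact ⟨fun s2 hs2 he => hxI ⟨s2, hs2, he⟩, ⟨s, hsi, hpos⟩⟩
        rw [hcombo.1 x hxb]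
        exact yz' x ⟨_, hxb⟩
  have hzz : z' = z := huniq z' hB
  intro x hx
  rw [yz' x hx, hzz]
end

section
/- Let E_S = E ∩ S be the set of non-terminal exits and define the linear map G : ℝ^{E_S} → ℝ^{E_S} by (Gy)(s) = Σ_{t ∈ T_i ∩ S} ζ^{(i)}_t(s)·y(t) for s ∈ E_S with s ∈ S_i. Then ‖Gy‖_∞ ≤ ρ·‖y‖_∞ for all y, where ρ = max_{s∈S} exp(R(s)/λ) < 1; consequently every (complex) eigenvalue μ of G satisfies |μ| ≤ ρ < 1. -/
open Classical

/-!
Each block of `G y` is the superposition `w = Σ_t y(t) ζ_t` of base solutions, itself a subtask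
solution whose boundary values are bounded by `‖y‖_∞`. At a state of `S_i` where `|w|` is
maximal, `w` is an `exp (R/λ)`-discounted average of values bounded by `max (max |w|) ‖y‖_∞`;
since `ρ < 1` this maximum principle forces `|w| ≤ ρ ‖y‖_∞` on `S_i`. Hence `G` has
`ℓ^∞` operator norm at most `ρ`, and the operator norm bounds every complex eigenvalue.
-/

open Finset

lemma abs_sum_mul_le_of_sum_eq_one {ι : Type*} [Fintype ι] {p f : ι → ℝ} {K : ℝ}
    (hp0 : ∀ x, 0 ≤ p x) (hp1 : ∑ x, p x = 1) (hf : ∀ x, 0 < p x → |f x| ≤ K) :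
    |∑ x, p x * f x| ≤ K :=
  calc |∑ x, p x * f x| ≤ ∑ x, p x * |f x| := by
        simpa only [abs_mul, abs_of_nonneg (hp0 _)] using
          abs_sum_le_sum_abs (fun x => p x * f x) univ
    _ ≤ ∑ x, p x * K := by
        refine sum_le_sum fun x _ => ?_
        rcases (hp0 x).eq_or_lt with hx | hx
        · simp [← hx]
        · exact mul_le_mul_of_nonneg_left (hf x hx) hx.le
    _ = K := by rw [← sum_mul, hp1, one_mul]

lemma abs_sum_mul_ite_eq_le {ι α : Type*} [Fintype ι] [DecidableEq α] {f : ι → α}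
    (hf : Function.Injective f) (y : ι → ℝ) (K : Finset ι) (x : α) :
    |∑ k ∈ K, y k * if x = f k then 1 else 0| ≤ ‖y‖ := by
  by_cases hx : ∃ k, f k = x
  · obtain ⟨k, rfl⟩ := hx
    simp only [hf.eq_iff, mul_ite, mul_one, mul_zero, sum_ite_eq]
    split_ifs
    · exact (Real.norm_eq_abs _).symm.trans_le (norm_le_pi_norm y k)
    · simp
  · push Not at hx
    simp [fun k => (hx k).symm]

section Subtask

variable {S T : Type} [Fintype S] [Fintype T] {P : S → S ⊕ T → ℝ} {R : S → ℝ} {lam : ℝ}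
  {Si : Finset S}

lemma mem_boundary_of_pos {s : S} {x : S ⊕ T} (hs : s ∈ Si) (hx : ∀ s' ∈ Si, x ≠ Sum.inl s')
    (hP : 0 < P s x) : x ∈ boundary P Si := by
  simpa [boundary] using ⟨hx, s, hs, hP⟩

theorem IsSubtaskSolution.sum {ι : Type*} {K : Finset ι} {b z : ι → S ⊕ T → ℝ} (c : ι → ℝ)
    (h : ∀ k ∈ K, IsSubtaskSolution P R lam Si (b k) (z k)) :
    IsSubtaskSolution P R lam Si (fun x => ∑ k ∈ K, c k * b k x)
      (fun x => ∑ k ∈ K, c k * z k x) := by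
  refine ⟨fun t ht => sum_congr rfl fun k hk => by rw [(h k hk).1 t ht], fun s hs => ?_⟩
  calc ∑ k ∈ K, c k * z k (Sum.inl s)
      = ∑ k ∈ K, c k * (Real.exp (R s / lam) * ∑ x, P s x * z k x) :=
        sum_congr rfl fun k hk => by rw [(h k hk).2 s hs]
    _ = Real.exp (R s / lam) * ∑ x, P s x * ∑ k ∈ K, c k * z k x := by
        simp only [mul_sum]
        rw [sum_comm]
        exact sum_congr rfl fun _ _ => sum_congr rfl fun _ _ => by ring

theorem IsSubtaskSolution.abs_le {b w : S ⊕ T → ℝ} (h : IsSubtaskSolution P R lam Si b w)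
    (hP0 : ∀ s x, 0 ≤ P s x) (hP1 : ∀ s, ∑ x, P s x = 1) {ρ B : ℝ}
    (hρ : ∀ s ∈ Si, Real.exp (R s / lam) ≤ ρ) (hρ1 : ρ < 1) (hB : 0 ≤ B)
    (hb : ∀ t ∈ boundary P Si, |b t| ≤ B) {s : S} (hs : s ∈ Si) :
    |w (Sum.inl s)| ≤ ρ * B := by
  obtain ⟨s₀, hs₀, hM⟩ := exists_mem_eq_sup' ⟨s, hs⟩ fun s => |w (Sum.inl s)|
  set M := Si.sup' ⟨s, hs⟩ fun s => |w (Sum.inl s)|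
  have hρ0 : 0 ≤ ρ := (Real.exp_pos _).le.trans (hρ s hs)
  have hM0 : 0 ≤ M := (abs_nonneg _).trans (le_sup' (fun s => |w (Sum.inl s)|) hs)
  have hbounded : ∀ x, 0 < P s₀ x → |w x| ≤ max M B := by
    intro x hx
    by_cases hin : ∃ s' ∈ Si, x = Sum.inl s'
    · obtain ⟨s', hs', rfl⟩ := hin
      exact (le_sup' (fun s => |w (Sum.inl s)|) hs').trans (le_max_left _ _)
    · push Not at hin
      have hx' := mem_boundary_of_pos hs₀ hin hx
      rw [h.1 x hx']
      exact (hb x hx').trans (le_max_right _ _)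
  have hstep : M ≤ ρ * max M B :=
    calc M = Real.exp (R s₀ / lam) * |∑ x, P s₀ x * w x| := by
          rw [hM, h.2 s₀ hs₀, abs_mul, abs_of_pos (Real.exp_pos _)]
      _ ≤ ρ * max M B := mul_le_mul (hρ s₀ hs₀)
          (abs_sum_mul_le_of_sum_eq_one (hP0 s₀) (hP1 s₀) hbounded) (abs_nonneg _) hρ0
  have hMB : M ≤ ρ * B := by
    rcases le_total M B with hMB | hBM
    · rwa [max_eq_right hMB] at hstep
    · rw [max_eq_left hBM] at hstep
      have hM_nonpos : M ≤ 0 := by nlinarith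
      linarith [mul_nonneg hρ0 hB]
  exact (le_sup' (fun s => |w (Sum.inl s)|) hs).trans hMB

theorem abs_sum_ite_mem_boundary_mul_le {ι : Type*} [Fintype ι] {ρ : ℝ} {f : ι → S ⊕ T}
    (hf : Function.Injective f) {zeta : S ⊕ T → S ⊕ T → ℝ}
    (hzeta : ∀ t ∈ boundary P Si,
      IsSubtaskSolution P R lam Si (fun x => if x = t then 1 else 0) (zeta t))
    (hP0 : ∀ s x, 0 ≤ P s x) (hP1 : ∀ s, ∑ x, P s x = 1)
    (hρ : ∀ s ∈ Si, Real.exp (R s / lam) ≤ ρ) (hρ1 : ρ < 1) (y : ι → ℝ) {s : S} (hs : s ∈ Si) :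
    |∑ k, if f k ∈ boundary P Si then zeta (f k) (Sum.inl s) * y k else 0| ≤ ρ * ‖y‖ := by
  rw [← sum_filter]
  simp_rw [mul_comm (zeta _ _)]
  have hw := IsSubtaskSolution.sum (K := univ.filter fun k => f k ∈ boundary P Si) y
    fun k hk => hzeta (f k) (mem_filter.1 hk).2
  exact hw.abs_le hP0 hP1 hρ hρ1 (norm_nonneg y) (fun x _ => abs_sum_mul_ite_eq_le hf y _ x) hs

end Subtask

namespace Matrix

attribute [local instance] Matrix.linftyOpNormedAddCommGroup

variable {m n 𝕜 : Type*} [Fintype m] [Fintype n]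

theorem norm_le_linfty_opNorm_of_hasEigenvalue [NormedField 𝕜] [DecidableEq n]
    {A : Matrix n n 𝕜} {μ : 𝕜} (hμ : Module.End.HasEigenvalue (toLin' A) μ) : ‖μ‖ ≤ ‖A‖ := by
  obtain ⟨v, hv⟩ := hμ.exists_hasEigenvector
  have hAv : A *ᵥ v = μ • v := by simpa only [toLin'_apply] using hv.apply_eq_smul
  refine le_of_mul_le_mul_right ?_ (norm_pos_iff.2 hv.2)
  calc ‖μ‖ * ‖v‖ = ‖A *ᵥ v‖ := by rw [hAv, norm_smul]
    _ ≤ ‖A‖ * ‖v‖ := linfty_opNorm_mulVec A v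

theorem linfty_opNorm_map_ofReal (A : Matrix m n ℝ) :
    ‖A.map (Complex.ofReal : ℝ → ℂ)‖ = ‖A‖ := by
  simp [linfty_opNorm_def]

theorem linfty_opNorm_toMatrix'_le [NontriviallyNormedField 𝕜] [NormedAlgebra ℝ 𝕜]
    [DecidableEq n] (f : (n → 𝕜) →ₗ[𝕜] (m → 𝕜)) {ρ : ℝ} (hρ : 0 ≤ ρ)
    (hf : ∀ v, ‖f v‖ ≤ ρ * ‖v‖) : ‖LinearMap.toMatrix' f‖ ≤ ρ := by
  rw [linfty_opNorm_eq_opNorm]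
  refine ContinuousLinearMap.opNorm_le_bound _ hρ fun v => ?_
  simpa using hf v

theorem norm_le_of_hasEigenvalue_toMatrix'_map_ofReal [DecidableEq n]
    (f : (n → ℝ) →ₗ[ℝ] (n → ℝ)) {ρ : ℝ} (hρ : 0 ≤ ρ) (hf : ∀ v, ‖f v‖ ≤ ρ * ‖v‖) {μ : ℂ}
    (hμ : Module.End.HasEigenvalue (toLin' ((LinearMap.toMatrix' f).map Complex.ofReal)) μ) :
    ‖μ‖ ≤ ρ :=
  calc ‖μ‖ ≤ ‖(LinearMap.toMatrix' f).map Complex.ofReal‖ :=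
        norm_le_linfty_opNorm_of_hasEigenvalue hμ
    _ = ‖LinearMap.toMatrix' f‖ := linfty_opNorm_map_ofReal _
    _ ≤ ρ := linfty_opNorm_toMatrix'_le f hρ hf

end Matrix

theorem statement14_general {S T : Type} [Fintype S] [Nonempty S] [Fintype T]
    (P : S → S ⊕ T → ℝ) (R : S → ℝ) (lam : ℝ)
    (hP0 : ∀ s x, 0 ≤ P s x) (hP1 : ∀ s, ∑ x : S ⊕ T, P s x = 1)
    (hR : ∀ s, R s < 0) (hlam : 0 < lam)
    (L : ℕ) (Si : Fin L → Finset S)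
    (hcover : ∀ s : S, ∃ i, s ∈ Si i)
    (zeta : Fin L → (S ⊕ T) → (S ⊕ T) → ℝ)
    (hzeta : ∀ i, ∀ t ∈ boundary P (Si i),
      IsSubtaskSolution P R lam (Si i) (fun x => if x = t then 1 else 0) (zeta i t))
    (G : ({s : S // Sum.inl s ∈ exitSet P Si} → ℝ) →ₗ[ℝ]
         ({s : S // Sum.inl s ∈ exitSet P Si} → ℝ))
    (hG : ∀ (y : {s : S // Sum.inl s ∈ exitSet P Si} → ℝ)
        (s : {s : S // Sum.inl s ∈ exitSet P Si}) (i : Fin L), s.1 ∈ Si i →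
      G y s = ∑ t : {s : S // Sum.inl s ∈ exitSet P Si},
        (if (Sum.inl t.1 : S ⊕ T) ∈ boundary P (Si i)
          then zeta i (Sum.inl t.1) (Sum.inl s.1) * y t else 0)) :
    let rho : ℝ := Finset.univ.sup' Finset.univ_nonempty (fun s : S => Real.exp (R s / lam))
    rho < 1 ∧
    (∀ y : {s : S // Sum.inl s ∈ exitSet P Si} → ℝ, ‖G y‖ ≤ rho * ‖y‖) ∧
    (∀ μ : ℂ, Module.End.HasEigenvalue
        (Matrix.toLin' ((LinearMap.toMatrix' G).map (Complex.ofReal : ℝ → ℂ))) μ →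
      ‖μ‖ ≤ rho) := by
  intro rho
  have hρ : ∀ s, Real.exp (R s / lam) ≤ rho := fun s =>
    le_sup' (fun s => Real.exp (R s / lam)) (mem_univ s)
  have hρ0 : 0 ≤ rho := (Real.exp_pos _).le.trans (hρ (Classical.arbitrary S))
  have hρ1 : rho < 1 :=
    (sup'_lt_iff _).2 fun s _ => Real.exp_lt_one_iff.2 (div_neg_of_neg_of_pos (hR s) hlam)
  have hGy : ∀ y, ‖G y‖ ≤ rho * ‖y‖ := by
    intro y
    refine (pi_norm_le_iff_of_nonneg (mul_nonneg hρ0 (norm_nonneg y))).2 fun s => ?_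
    obtain ⟨i, hi⟩ := hcover s.1
    rw [hG y s i hi, Real.norm_eq_abs]
    exact abs_sum_ite_mem_boundary_mul_le (f := fun t => Sum.inl t.1)
      (fun _ _ h => Subtype.ext (Sum.inl_injective h)) (hzeta i) hP0 hP1 (fun s _ => hρ s) hρ1
      y hi
  exact ⟨hρ1, hGy, fun μ => Matrix.norm_le_of_hasEigenvalue_toMatrix'_map_ofReal G hρ0 hGy⟩

/-- let `E_S = E ∩ S` be the set of non-terminal exits and let
`G : ℝ^{E_S} → ℝ^{E_S}` be the linear map given by `(Gy)(s) = Σ_{t ∈ T_i ∩ S} ζ^{(i)}_t(s)·y(t)`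
for `s ∈ E_S` with `s ∈ S_i`. Then `‖Gy‖_∞ ≤ ρ·‖y‖_∞` for all `y`, where
`ρ = max_{s∈S} exp(R(s)/λ) < 1`; consequently every complex eigenvalue `μ` of `G` (i.e. of the
complexification of the matrix of `G`) satisfies `|μ| ≤ ρ < 1`. -/
theorem statement14 {S T : Type} [Fintype S] [Nonempty S] [Fintype T]
    (P : S → S ⊕ T → ℝ) (R : S → ℝ) (J : T → ℝ) (lam : ℝ)
    (hP0 : ∀ s x, 0 ≤ P s x) (hP1 : ∀ s, ∑ x : S ⊕ T, P s x = 1)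
    (hR : ∀ s, R s < 0) (hlam : 0 < lam)
    (L : ℕ) (Si : Fin L → Finset S)
    (hdisj : ∀ i j, i ≠ j → Disjoint (Si i) (Si j))
    (hcover : ∀ s : S, ∃ i, s ∈ Si i)
    (zeta : Fin L → (S ⊕ T) → (S ⊕ T) → ℝ)
    (hzeta : ∀ i, ∀ t ∈ boundary P (Si i),
      IsSubtaskSolution P R lam (Si i) (fun x => if x = t then 1 else 0) (zeta i t))
    (G : ({s : S // Sum.inl s ∈ exitSet P Si} → ℝ) →ₗ[ℝ]
         ({s : S // Sum.inl s ∈ exitSet P Si} → ℝ))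
    (hG : ∀ (y : {s : S // Sum.inl s ∈ exitSet P Si} → ℝ)
        (s : {s : S // Sum.inl s ∈ exitSet P Si}) (i : Fin L), s.1 ∈ Si i →
      G y s = ∑ t : {s : S // Sum.inl s ∈ exitSet P Si},
        (if (Sum.inl t.1 : S ⊕ T) ∈ boundary P (Si i)
          then zeta i (Sum.inl t.1) (Sum.inl s.1) * y t else 0)) :
    let rho : ℝ := Finset.univ.sup' Finset.univ_nonempty (fun s : S => Real.exp (R s / lam))
    rho < 1 ∧
    (∀ y : {s : S // Sum.inl s ∈ exitSet P Si} → ℝ, ‖G y‖ ≤ rho * ‖y‖) ∧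
    (∀ μ : ℂ, Module.End.HasEigenvalue
        (Matrix.toLin' ((LinearMap.toMatrix' G).map (Complex.ofReal : ℝ → ℂ))) μ →
      ‖μ‖ ≤ rho) :=
  statement14_general P R lam hP0 hP1 hR hlam L Si hcover zeta hzeta G hG
end

section
/- Define the iteration on functions y : E → ℝ by y_{m+1}(t) = exp(J(t)/λ) for t ∈ E ∩ T and y_{m+1}(s) = Σ_{t∈T_i} ζ^{(i)}_t(s)·y_m(t) for s ∈ E ∩ S with s ∈ S_i. Let y* be the unique solution of the exit system. Then for every initial y₀ : E → ℝ with y₀(t) = exp(J(t)/λ) on E ∩ T and every m ∈ ℕ, ‖y_m − y*‖_∞ ≤ ρᵐ·‖y₀ − y*‖_∞, where ρ = max_{s∈S} exp(R(s)/λ) < 1; in particular the iterates converge to y*. -/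
open Classical

/-- `y : E → ℝ` solves the exit system if `y(t) = exp(J(t)/λ)` for every `t ∈ E ∩ T` and, for
every `s ∈ E ∩ S` with `s ∈ S_i`, `y(s) = Σ_{t∈T_i} ζ^{(i)}_t(s)·y(t)` (since `T_i ⊆ E`, the
sum over `t ∈ T_i` is written as a guarded sum over all exits). -/
def SolvesExitSystemE {S T : Type} [Fintype S] [Fintype T]
    (P : S → S ⊕ T → ℝ) (J : T → ℝ) (lam : ℝ) {L : ℕ} (Si : Fin L → Finset S)
    (zeta : Fin L → (S ⊕ T) → (S ⊕ T) → ℝ)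
    (y : {x : S ⊕ T // x ∈ exitSet P Si} → ℝ) : Prop :=
  (∀ (t : T) (h : Sum.inr t ∈ exitSet P Si), y ⟨Sum.inr t, h⟩ = Real.exp (J t / lam)) ∧
  (∀ (i : Fin L), ∀ s ∈ Si i, ∀ h : Sum.inl s ∈ exitSet P Si,
    y ⟨Sum.inl s, h⟩ = ∑ t : {x : S ⊕ T // x ∈ exitSet P Si},
      (if t.1 ∈ boundary P (Si i) then zeta i t.1 (Sum.inl s) * y t else 0))

/-- Maximum principle for subtask Bellman equations: if `z` satisfies the Bellman recursion on
`S_i` and `|z| ≤ B` on the boundary, then `|z| ≤ ρ·B` on `S_i`. -/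
theorem maxPrin {S T : Type} [Fintype S] [Fintype T]
    (P : S → S ⊕ T → ℝ) (R : S → ℝ) (lam : ℝ)
    (hP0 : ∀ s x, 0 ≤ P s x) (hP1 : ∀ s, ∑ x : S ⊕ T, P s x = 1)
    (Si : Finset S) (z : S ⊕ T → ℝ)
    (hz : ∀ s ∈ Si, z (Sum.inl s) = Real.exp (R s / lam) * ∑ x : S ⊕ T, P s x * z x)
    (B : ℝ) (hB : 0 ≤ B)
    (hbd : ∀ t ∈ boundary P Si, |z t| ≤ B)
    (rho : ℝ) (hrho : ∀ s : S, Real.exp (R s / lam) ≤ rho) (hrho1 : rho < 1) :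
    ∀ s ∈ Si, |z (Sum.inl s)| ≤ rho * B := by
  rcases Si.eq_empty_or_nonempty with hSi | hSi
  · simp [hSi]
  obtain ⟨s₀, hs₀, hmax⟩ := Si.exists_max_image (fun s => |z (Sum.inl s)|) hSi
  set M : ℝ := |z (Sum.inl s₀)| with hM
  have hrho0 : 0 ≤ rho := le_trans (Real.exp_pos _).le (hrho s₀)
  have hCnn : 0 ≤ max M B := le_trans hB (le_max_right _ _)
  -- termwise bound
  have hterm : ∀ x : S ⊕ T, P s₀ x * |z x| ≤ P s₀ x * max M B := by
    intro x
    rcases lt_or_eq_of_le (hP0 s₀ x) with hpos | heq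
    · apply mul_le_mul_of_nonneg_left _ (hP0 s₀ x)
      by_cases hin : ∃ s' ∈ Si, x = Sum.inl s'
      · obtain ⟨s', hs', rfl⟩ := hin
        exact le_trans (hmax s' hs') (le_max_left _ _)
      · have hxb : x ∈ boundary P Si := by
          simp only [boundary, Finset.mem_filter, Finset.mem_univ, true_and]
          refine ⟨fun s hs hne => hin ⟨s, hs, hne⟩, ⟨s₀, hs₀, hpos⟩⟩
        exact le_trans (hbd x hxb) (le_max_right _ _)
    · rw [← heq]; simp
  have hMle : M ≤ rho * max M B := by
    have h1 : |∑ x : S ⊕ T, P s₀ x * z x| ≤ max M B := by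
      calc |∑ x : S ⊕ T, P s₀ x * z x| ≤ ∑ x : S ⊕ T, |P s₀ x * z x| :=
            Finset.abs_sum_le_sum_abs _ _
        _ = ∑ x : S ⊕ T, P s₀ x * |z x| := by
            refine Finset.sum_congr rfl fun x _ => ?_
            rw [abs_mul, abs_of_nonneg (hP0 s₀ x)]
        _ ≤ ∑ x : S ⊕ T, P s₀ x * max M B := Finset.sum_le_sum fun x _ => hterm x
        _ = max M B := by rw [← Finset.sum_mul, hP1, one_mul]
    calc M = |z (Sum.inl s₀)| := rfl
      _ = Real.exp (R s₀ / lam) * |∑ x : S ⊕ T, P s₀ x * z x| := by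
          rw [hz s₀ hs₀, abs_mul, abs_of_pos (Real.exp_pos _)]
      _ ≤ rho * max M B := by
          apply mul_le_mul (hrho s₀) h1 (abs_nonneg _) hrho0
  have hMB : M ≤ rho * B := by
    rcases le_or_gt M B with h | h
    · calc M ≤ rho * max M B := hMle
        _ = rho * B := by rw [max_eq_right h]
    · exfalso
      have hMpos : 0 < M := lt_of_le_of_lt hB h
      have : M ≤ rho * M := by rwa [max_eq_left h.le] at hMle
      have : M < M := lt_of_le_of_lt this (by nlinarith)
      exact lt_irrefl _ this
  intro s hs
  exact le_trans (hmax s hs) hMB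

/-- consider the iteration on `y : E → ℝ` given by `y_{m+1}(t) = exp(J(t)/λ)` for
`t ∈ E ∩ T` and `y_{m+1}(s) = Σ_{t∈T_i} ζ^{(i)}_t(s)·y_m(t)` for `s ∈ E ∩ S` with `s ∈ S_i`,
and let `y*` be the unique solution of the exit system. Then for every initial `y₀ : E → ℝ`
with `y₀(t) = exp(J(t)/λ)` on `E ∩ T` and every `m ∈ ℕ`,
`‖y_m − y*‖_∞ ≤ ρᵐ·‖y₀ − y*‖_∞`, where `ρ = max_{s∈S} exp(R(s)/λ) < 1`; in particular the
iterates converge to `y*`. -/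
theorem statement15 {S T : Type} [Fintype S] [Nonempty S] [Fintype T]
    (P : S → S ⊕ T → ℝ) (R : S → ℝ) (J : T → ℝ) (lam : ℝ)
    (hP0 : ∀ s x, 0 ≤ P s x) (hP1 : ∀ s, ∑ x : S ⊕ T, P s x = 1)
    (hR : ∀ s, R s < 0) (hlam : 0 < lam)
    (L : ℕ) (Si : Fin L → Finset S)
    (hdisj : ∀ i j, i ≠ j → Disjoint (Si i) (Si j))
    (hcover : ∀ s : S, ∃ i, s ∈ Si i)
    (zeta : Fin L → (S ⊕ T) → (S ⊕ T) → ℝ)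
    (hzeta : ∀ i, ∀ t ∈ boundary P (Si i),
      IsSubtaskSolution P R lam (Si i) (fun x => if x = t then 1 else 0) (zeta i t))
    (Psi : ({x : S ⊕ T // x ∈ exitSet P Si} → ℝ) → ({x : S ⊕ T // x ∈ exitSet P Si} → ℝ))
    (hPsiT : ∀ (y : {x : S ⊕ T // x ∈ exitSet P Si} → ℝ) (t : T)
        (h : Sum.inr t ∈ exitSet P Si), Psi y ⟨Sum.inr t, h⟩ = Real.exp (J t / lam))
    (hPsiS : ∀ (y : {x : S ⊕ T // x ∈ exitSet P Si} → ℝ) (i : Fin L), ∀ s ∈ Si i,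
        ∀ h : Sum.inl s ∈ exitSet P Si,
      Psi y ⟨Sum.inl s, h⟩ = ∑ t : {x : S ⊕ T // x ∈ exitSet P Si},
        (if t.1 ∈ boundary P (Si i) then zeta i t.1 (Sum.inl s) * y t else 0))
    (ystar : {x : S ⊕ T // x ∈ exitSet P Si} → ℝ)
    (hystar : SolvesExitSystemE P J lam Si zeta ystar)
    (huniq : ∀ y : {x : S ⊕ T // x ∈ exitSet P Si} → ℝ,
      SolvesExitSystemE P J lam Si zeta y → y = ystar) :
    let rho : ℝ := Finset.univ.sup' Finset.univ_nonempty (fun s : S => Real.exp (R s / lam))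
    rho < 1 ∧
    ∀ y0 : {x : S ⊕ T // x ∈ exitSet P Si} → ℝ,
      (∀ (t : T) (h : Sum.inr t ∈ exitSet P Si), y0 ⟨Sum.inr t, h⟩ = Real.exp (J t / lam)) →
      (∀ m : ℕ, ‖Psi^[m] y0 - ystar‖ ≤ rho ^ m * ‖y0 - ystar‖) ∧
      Filter.Tendsto (fun m => Psi^[m] y0) Filter.atTop (nhds ystar) := by
  intro rho
  have hrho : ∀ s : S, Real.exp (R s / lam) ≤ rho := fun s =>
    Finset.le_sup' (fun s : S => Real.exp (R s / lam)) (Finset.mem_univ s)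
  have hrho1 : rho < 1 := by
    rw [Finset.sup'_lt_iff]
    intro s _
    rw [Real.exp_lt_one_iff]
    exact div_neg_of_neg_of_pos (hR s) hlam
  have hrho0 : 0 ≤ rho := le_trans (Real.exp_pos _).le (hrho Classical.ofNonempty)
  -- the core contraction estimate
  have key : ∀ y : {x : S ⊕ T // x ∈ exitSet P Si} → ℝ,
      ‖Psi y - ystar‖ ≤ rho * ‖y - ystar‖ := by
    intro y
    have hCnn : 0 ≤ ‖y - ystar‖ := norm_nonneg _
    rw [pi_norm_le_iff_of_nonneg (mul_nonneg hrho0 hCnn)]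
    rintro ⟨x, hx⟩
    match x with
    | Sum.inr t =>
      have : (Psi y - ystar) ⟨Sum.inr t, hx⟩ = 0 := by
        rw [Pi.sub_apply, hPsiT y t hx, hystar.1 t hx, sub_self]
      rw [this]
      simpa using mul_nonneg hrho0 hCnn
    | Sum.inl s =>
      obtain ⟨i, hi⟩ := hcover s
      set d : {x : S ⊕ T // x ∈ exitSet P Si} → ℝ := fun t => y t - ystar t with hd
      set z : S ⊕ T → ℝ := fun u => ∑ t : {x : S ⊕ T // x ∈ exitSet P Si},
        (if t.1 ∈ boundary P (Si i) then zeta i t.1 u * d t else 0) with hzdef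
      -- z satisfies the Bellman recursion on Si i
      have hzbell : ∀ s' ∈ Si i, z (Sum.inl s')
          = Real.exp (R s' / lam) * ∑ x : S ⊕ T, P s' x * z x := by
        intro s' hs'
        calc z (Sum.inl s')
            = ∑ t : {x : S ⊕ T // x ∈ exitSet P Si},
              (if t.1 ∈ boundary P (Si i) then
                (Real.exp (R s' / lam) * ∑ x : S ⊕ T, P s' x * zeta i t.1 x) * d t else 0) := by
              refine Finset.sum_congr rfl fun t _ => ?_
              split
              · rename_i hbt
                rw [(hzeta i t.1 hbt).2 s' hs']
              · rfl
          _ = Real.exp (R s' / lam) * ∑ t : {x : S ⊕ T // x ∈ exitSet P Si},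
              (if t.1 ∈ boundary P (Si i) then
                (∑ x : S ⊕ T, P s' x * zeta i t.1 x) * d t else 0) := by
              rw [Finset.mul_sum]
              refine Finset.sum_congr rfl fun t _ => ?_
              split <;> ring
          _ = Real.exp (R s' / lam) * ∑ x : S ⊕ T, P s' x * z x := by
              congr 1
              calc ∑ t : {x : S ⊕ T // x ∈ exitSet P Si},
                  (if t.1 ∈ boundary P (Si i) then
                    (∑ x : S ⊕ T, P s' x * zeta i t.1 x) * d t else 0)
                  = ∑ t : {x : S ⊕ T // x ∈ exitSet P Si}, ∑ x : S ⊕ T,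
                    (if t.1 ∈ boundary P (Si i) then P s' x * (zeta i t.1 x * d t) else 0) := by
                    refine Finset.sum_congr rfl fun t _ => ?_
                    split
                    · rw [Finset.sum_mul]
                      refine Finset.sum_congr rfl fun x _ => by ring
                    · simp
                _ = ∑ x : S ⊕ T, ∑ t : {x : S ⊕ T // x ∈ exitSet P Si},
                    (if t.1 ∈ boundary P (Si i) then P s' x * (zeta i t.1 x * d t) else 0) :=
                    Finset.sum_comm
                _ = ∑ x : S ⊕ T, P s' x * z x := by
                    refine Finset.sum_congr rfl fun x _ => ?_
                    simp only [hzdef]; rw [Finset.mul_sum]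
                    refine Finset.sum_congr rfl fun t _ => ?_
                    split <;> simp [mul_assoc]
      -- z is bounded by ‖y - ystar‖ on the boundary
      have hzbd : ∀ u ∈ boundary P (Si i), |z u| ≤ ‖y - ystar‖ := by
        intro u hu
        have huE : u ∈ exitSet P Si := ⟨i, hu⟩
        have hzu : z u = d ⟨u, huE⟩ := by
          simp only [hzdef]
          rw [Finset.sum_eq_single (⟨u, huE⟩ : {x : S ⊕ T // x ∈ exitSet P Si})]
          · simp only
            rw [if_pos hu, (hzeta i u hu).1 u hu]
            simp
          · rintro t _ hne
            split
            · rename_i hbt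
              rw [(hzeta i t.1 hbt).1 u hu]
              have hne' : u ≠ t.1 := fun heq => hne (Subtype.ext heq.symm)
              simp [hne']
            · rfl
          · intro h
            exact absurd (Finset.mem_univ _) h
        rw [hzu]
        have := norm_le_pi_norm (y - ystar) ⟨u, huE⟩
        rw [Pi.sub_apply, Real.norm_eq_abs] at this
        exact this
      -- apply the maximum principle
      have hmp := maxPrin P R lam hP0 hP1 (Si i) z hzbell ‖y - ystar‖ hCnn hzbd rho hrho hrho1
        s hi
      -- identify (Psi y - ystar) at this point with z (inl s)
      have heq : (Psi y - ystar) ⟨Sum.inl s, hx⟩ = z (Sum.inl s) := by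
        simp only [Pi.sub_apply, hPsiS y i s hi hx, hystar.2 i s hi hx, hzdef,
          ← Finset.sum_sub_distrib]
        refine Finset.sum_congr rfl fun t _ => ?_
        split <;> [skip; simp] <;> ring
      rw [heq, Real.norm_eq_abs]
      exact hmp
  -- conclusion
  refine ⟨hrho1, fun y0 _ => ?_⟩
  have hbound : ∀ m : ℕ, ‖Psi^[m] y0 - ystar‖ ≤ rho ^ m * ‖y0 - ystar‖ := by
    intro m
    induction m with
    | zero => simp
    | succ m ih =>
      rw [Function.iterate_succ_apply']
      calc ‖Psi (Psi^[m] y0) - ystar‖ ≤ rho * ‖Psi^[m] y0 - ystar‖ := key _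
        _ ≤ rho * (rho ^ m * ‖y0 - ystar‖) := mul_le_mul_of_nonneg_left ih hrho0
        _ = rho ^ (m + 1) * ‖y0 - ystar‖ := by ring
  refine ⟨hbound, ?_⟩
  rw [tendsto_iff_norm_sub_tendsto_zero]
  apply squeeze_zero (fun m => norm_nonneg _) hbound
  have : Filter.Tendsto (fun m : ℕ => rho ^ m) Filter.atTop (nhds 0) :=
    tendsto_pow_atTop_nhds_zero_of_lt_one hrho0 hrho1
  simpa using this.mul_const ‖y0 - ystar‖
end
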